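/- arXiv:nlin/0407024 — 6 statements merged into one kernel-verified Lean document; each statement's English description precedes it below -/
import Mathlib

section
/- A sequence π of n > 1 nonnegative integers is graphic (i.e., is the degree sequence of a simple graph on n vertices) if and only if the sequence π' with n−1 elements, obtained from π by deleting its largest element d_max and subtracting 1 from its d_max next largest elements, is graphic. -/
open SimpleGraph Finset

/-- The normalized Laplacian matrix `I - D^{-1/2} A D^{-1/2}` of a finite simple graph. -/
noncomputable def normLap {n : ℕ} (G : SimpleGraph (Fin n)) [DecidableRel G.Adj] :
    Matrix (Fin n) (Fin n) ℝ :=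
  Matrix.of fun v w =>
    if v = w then (if G.degree v = 0 then 0 else 1)
    else if G.Adj v w then -((Real.sqrt (G.degree v) * Real.sqrt (G.degree w))⁻¹)
    else 0

/-- The smallest nontrivial (nonzero) eigenvalue of the normalized Laplacian. -/
noncomputable def lambda1 {n : ℕ} (G : SimpleGraph (Fin n)) [DecidableRel G.Adj] : ℝ :=
  sInf {μ : ℝ | μ ≠ 0 ∧ μ ∈ spectrum ℝ (normLap G)}

/-- The degree sequence (as a multiset) of a finite simple graph. -/
def degSeq {n : ℕ} (G : SimpleGraph (Fin n)) [DecidableRel G.Adj] : Multiset ℕ :=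
  Finset.univ.val.map fun v => G.degree v

/-- A multiset of natural numbers is graphic if it is the degree sequence of a simple graph. -/
def Graphic (π : Multiset ℕ) : Prop :=
  ∃ (G : SimpleGraph (Fin (Multiset.card π))) (_ : DecidableRel G.Adj), degSeq G = π

/-!
A realization of `d :: t` can be normalized by 2-switches: if the top vertex `v` misses some
`i` among the `d` largest other vertices but is adjacent to some `j` outside them, then
`deg j ≤ deg i` yields a neighbour `w` of `i` not adjacent to `j`, and trading the edges
`vj, iw` for `vi, jw` keeps every degree. Once `v` is adjacent exactly to those `d` vertices,
deleting it realizes the reduced sequence; conversely, a new vertex joined to those `d`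
vertices turns a realization of the reduced sequence into one of `d :: t`.
-/

namespace SimpleGraph

variable {V : Type*} [Fintype V]

theorem degree_eq_sum_ite (G : SimpleGraph V) [DecidableRel G.Adj] (v : V) :
    G.degree v = ∑ x, if G.Adj v x then 1 else 0 := by
  rw [← card_neighborFinset_eq_degree, neighborFinset_eq_filter, Finset.card_filter]

theorem degree_comap_equiv {W : Type*} [Fintype W] (G : SimpleGraph V) [DecidableRel G.Adj]
    (e : W ≃ V) (w : W) : (G.comap e).degree w = G.degree (e w) := by
  simp only [degree_eq_sum_ite, comap_adj]
  exact e.sum_comp fun x => if G.Adj (e w) x then 1 else 0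

theorem degree_sup_of_disjoint (G A : SimpleGraph V) [DecidableRel G.Adj] [DecidableRel A.Adj]
    [DecidableRel (G ⊔ A).Adj] (hA : Disjoint G A) (v : V) :
    (G ⊔ A).degree v = G.degree v + A.degree v := by
  simp only [degree_eq_sum_ite, ← Finset.sum_add_distrib]
  refine Finset.sum_congr rfl fun x _ => ?_
  have hA' : ¬(G.Adj v x ∧ A.Adj v x) := fun h => hA.le_bot h
  by_cases G.Adj v x <;> by_cases A.Adj v x <;> simp_all

theorem degree_sdiff_sup_add_degree (G R A : SimpleGraph V) [DecidableRel G.Adj]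
    [DecidableRel R.Adj] [DecidableRel A.Adj] [DecidableRel (G \ R ⊔ A).Adj]
    (hR : R ≤ G) (hA : Disjoint G A) (v : V) :
    (G \ R ⊔ A).degree v + R.degree v = G.degree v + A.degree v := by
  simp only [degree_eq_sum_ite, ← Finset.sum_add_distrib]
  refine Finset.sum_congr rfl fun x _ => ?_
  have hR' := @hR v x
  have hA' : ¬(G.Adj v x ∧ A.Adj v x) := fun h => hA.le_bot h
  by_cases G.Adj v x <;> by_cases R.Adj v x <;> by_cases A.Adj v x <;> simp_all

theorem degree_edge [DecidableEq V] {a b : V} (hab : a ≠ b) (v : V) :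
    (edge a b).degree v = (if v = a then 1 else 0) + if v = b then 1 else 0 := by
  have hN : (edge a b).neighborFinset v =
      (if v = a then {b} else ∅) ∪ (if v = b then {a} else ∅) := by
    ext x
    simp only [mem_neighborFinset, edge_adj]
    split_ifs <;> grind
  rw [← card_neighborFinset_eq_degree, hN]
  split_ifs <;> grind

theorem exists_adj_not_adj_of_degree_le [DecidableEq V] (G : SimpleGraph V) [DecidableRel G.Adj]
    {v i j : V} (hvj : G.Adj v j) (hvi : ¬G.Adj v i) (hiv : i ≠ v)
    (hji : G.degree j ≤ G.degree i) : ∃ w, G.Adj i w ∧ w ≠ j ∧ ¬G.Adj j w := by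
  -- otherwise `v` together with `N(i) \ {j}` fits into `N(j) \ {i}`, so `deg i < deg j`
  by_contra! h
  have hsub : insert v ((G.neighborFinset i).erase j) ⊆ (G.neighborFinset j).erase i := by
    intro x hx
    simp only [Finset.mem_insert, Finset.mem_erase, mem_neighborFinset] at hx ⊢
    rcases hx with rfl | ⟨hxj, hix⟩
    · exact ⟨hiv.symm, hvj.symm⟩
    · exact ⟨(G.ne_of_adj hix).symm, h x hix hxj⟩
  have hcard := Finset.card_le_card hsub
  rw [Finset.card_insert_of_notMem (by simp [adj_comm, hvi]), Finset.card_erase_eq_ite,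
    Finset.card_erase_eq_ite] at hcard
  simp only [mem_neighborFinset, card_neighborFinset_eq_degree, G.adj_comm j i] at hcard
  split_ifs at hcard <;> omega

theorem exists_switch [DecidableEq V] (G : SimpleGraph V) [DecidableRel G.Adj] {v i j : V}
    (hvj : G.Adj v j) (hvi : ¬G.Adj v i) (hiv : i ≠ v) (hji : G.degree j ≤ G.degree i) :
    ∃ (G' : SimpleGraph V) (_ : DecidableRel G'.Adj), (∀ u, G'.degree u = G.degree u) ∧
      ∀ u, G'.Adj v u ↔ u = i ∨ (G.Adj v u ∧ u ≠ j) := by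
  obtain ⟨w, hiw, hwj, hjw⟩ := G.exists_adj_not_adj_of_degree_le hvj hvi hiv hji
  have hvw : v ≠ w := fun h => hvi (h ▸ hiw.symm)
  have hvj' : v ≠ j := G.ne_of_adj hvj
  have hiw' : i ≠ w := G.ne_of_adj hiw
  set R := edge v j ⊔ edge i w
  set A := edge v i ⊔ edge j w
  have hR : R ≤ G := sup_le ((edge_le_iff _).2 (Or.inr hvj)) ((edge_le_iff _).2 (Or.inr hiw))
  have hA : Disjoint G A :=
    disjoint_sup_right.2 ⟨(disjoint_edge _).2 hvi, (disjoint_edge _).2 hjw⟩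
  have hRA : ∀ u, R.degree u = A.degree u := by
    intro u
    rw [degree_sup_of_disjoint _ _ ((disjoint_edge _).2 (by rw [edge_adj]; grind)),
      degree_sup_of_disjoint _ _ ((disjoint_edge _).2 (by rw [edge_adj]; grind)),
      degree_edge hvj', degree_edge hiw', degree_edge hiv.symm, degree_edge hwj.symm]
    split_ifs <;> omega
  refine ⟨G \ R ⊔ A, inferInstance, fun u => ?_, fun u => ?_⟩
  · have := degree_sdiff_sup_add_degree G R A hR hA u
    rw [hRA u] at this
    omega
  · simp only [R, A, sup_adj, sdiff_adj, edge_adj]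
    grind

theorem exists_adj_iff_mem_of_degree_eq [DecidableEq V] {f : V → ℕ} {v : V} {T : Finset V}
    (hvT : v ∉ T) (hT : #T = f v) (hmax : ∀ i ∈ T, ∀ j ∉ T, j ≠ v → f j ≤ f i)
    (G : SimpleGraph V) [DecidableRel G.Adj] (hG : ∀ u, G.degree u = f u) :
    ∃ (G' : SimpleGraph V) (_ : DecidableRel G'.Adj), (∀ u, G'.degree u = f u) ∧
      ∀ u, G'.Adj v u ↔ u ∈ T := by
  induction hk : #(T \ G.neighborFinset v) generalizing G with
  | zero =>
    have hsub : T ⊆ G.neighborFinset v := Finset.sdiff_eq_empty_iff_subset.1 (card_eq_zero.1 hk)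
    have hN : G.neighborFinset v = T := (Finset.eq_of_subset_of_card_le hsub
      (by rw [card_neighborFinset_eq_degree, hG, hT])).symm
    exact ⟨G, inferInstance, hG, fun u => by rw [← hN, mem_neighborFinset]⟩
  | succ k ih =>
    obtain ⟨i, hi⟩ := (Finset.card_pos (s := T \ G.neighborFinset v)).1 (by rw [hk]; omega)
    obtain ⟨hiT, hiN⟩ := Finset.mem_sdiff.1 hi
    obtain ⟨j, hjN, hjT⟩ : ∃ j ∈ G.neighborFinset v, j ∉ T := by
      by_contra! hNT
      have hN : G.neighborFinset v = T := Finset.eq_of_subset_of_card_le hNT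
        (by rw [card_neighborFinset_eq_degree, hG, hT])
      exact hiN (hN.symm ▸ hiT)
    rw [mem_neighborFinset] at hiN hjN
    have hjv : j ≠ v := (G.ne_of_adj hjN).symm
    have hiv : i ≠ v := fun h => hvT (h ▸ hiT)
    obtain ⟨G', _, hG'deg, hG'adj⟩ :=
      G.exists_switch hjN hiN hiv (by rw [hG, hG]; exact hmax i hiT j hjT hjv)
    refine ih G' (fun u => (hG'deg u).trans (hG u)) ?_
    have hsdiff : T \ G'.neighborFinset v = (T \ G.neighborFinset v).erase i := by
      ext u
      simp only [Finset.mem_sdiff, Finset.mem_erase, mem_neighborFinset, hG'adj]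
      grind
    rw [hsdiff, Finset.card_erase_of_mem hi, hk, Nat.add_sub_cancel]

variable {n : ℕ}

theorem degree_fin_succ (G : SimpleGraph (Fin (n + 1))) [DecidableRel G.Adj] (a : Fin n) :
    G.degree a.succ = (G.comap Fin.succ).degree a + if G.Adj a.succ 0 then 1 else 0 := by
  rw [degree_eq_sum_ite, degree_eq_sum_ite, Fin.sum_univ_succ, add_comm]
  rfl

theorem degree_fin_zero (G : SimpleGraph (Fin (n + 1))) [DecidableRel G.Adj] :
    G.degree 0 = #{a : Fin n | G.Adj 0 a.succ} := by
  rw [degree_eq_sum_ite, Fin.sum_univ_succ, card_filter]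
  simp

def finCons (S : Finset (Fin n)) (H : SimpleGraph (Fin n)) : SimpleGraph (Fin (n + 1)) where
  Adj x y := Fin.cases (Fin.cases False (· ∈ S) y) (fun a => Fin.cases (a ∈ S) (H.Adj a) y) x
  symm := ⟨fun x y => by
    cases x using Fin.cases <;> cases y using Fin.cases <;> simp [adj_comm]⟩
  loopless := ⟨fun x => by cases x using Fin.cases <;> simp⟩

variable (S : Finset (Fin n)) (H : SimpleGraph (Fin n))

@[simp] theorem finCons_adj_zero_succ (a : Fin n) : (finCons S H).Adj 0 a.succ ↔ a ∈ S := by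
  simp [finCons]

@[simp] theorem finCons_adj_succ_zero (a : Fin n) : (finCons S H).Adj a.succ 0 ↔ a ∈ S := by
  simp [finCons]

@[simp] theorem comap_succ_finCons : (finCons S H).comap Fin.succ = H := by
  ext; simp [finCons]

theorem degree_finCons_zero [DecidableRel (finCons S H).Adj] : (finCons S H).degree 0 = #S := by
  simp [degree_fin_zero]

theorem degree_finCons_succ [DecidableRel (finCons S H).Adj] [DecidableRel H.Adj] (a : Fin n) :
    (finCons S H).degree a.succ = H.degree a + if a ∈ S then 1 else 0 := by
  rw [degree_fin_succ]
  congr 1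
  · convert rfl
    simp
  · simp

end SimpleGraph

theorem Fintype.exists_equiv_comp_eq_of_map_univ_eq {α β γ : Type*} [Fintype α] [Fintype β]
    [DecidableEq γ] {f : α → γ} {g : β → γ}
    (h : univ.val.map f = univ.val.map g) : ∃ e : β ≃ α, ∀ b, f (e b) = g b := by
  have hfib (c : γ) : Fintype.card {b // g b = c} = Fintype.card {a // f a = c} := by
    have hc := congrArg (Multiset.count c) h
    simp only [Multiset.count_map, eq_comm (a := c)] at hc
    simp only [Fintype.card_subtype]
    exact hc.symm
  exact ⟨Equiv.ofFiberEquiv fun c => Fintype.equivOfCardEq (hfib c),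
    Equiv.ofFiberEquiv_map _⟩

def IsGraphic {V : Type*} [Fintype V] (f : V → ℕ) : Prop :=
  ∃ (G : SimpleGraph V) (_ : DecidableRel G.Adj), ∀ v, G.degree v = f v

theorem IsGraphic.comp_equiv {V W : Type*} [Fintype V] [Fintype W] {f : V → ℕ}
    (hf : IsGraphic f) (e : W ≃ V) : IsGraphic (f ∘ e) := by
  obtain ⟨G, _, hG⟩ := hf
  exact ⟨G.comap e, inferInstance, fun w => (G.degree_comap_equiv e w).trans (hG _)⟩

theorem graphic_map_univ_iff {V : Type*} [Fintype V] (f : V → ℕ) :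
    Graphic (univ.val.map f) ↔ IsGraphic f := by
  constructor
  · rintro ⟨G, _, hG⟩
    obtain ⟨e, he⟩ := Fintype.exists_equiv_comp_eq_of_map_univ_eq hG
    have hdeg : IsGraphic fun v => G.degree v := ⟨G, inferInstance, fun _ => rfl⟩
    simpa only [Function.comp_def, he] using hdeg.comp_equiv e
  · intro hf
    have hcard : Fintype.card V = Multiset.card (univ.val.map f) := by simp
    obtain ⟨G, _, hG⟩ := hf.comp_equiv (Fintype.equivFinOfCardEq hcard).symm
    refine ⟨G, inferInstance, ?_⟩
    simp only [degSeq, hG, ← Multiset.map_map, Multiset.map_univ_val_equiv]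

theorem isGraphic_cons_iff {n d : ℕ} {g : Fin n → ℕ} {S : Finset (Fin n)} (hS : #S = d)
    (hmax : ∀ a ∈ S, ∀ b ∉ S, g b ≤ g a) (hpos : ∀ a ∈ S, 0 < g a) :
    IsGraphic (Fin.cons d g : Fin (n + 1) → ℕ) ↔
      IsGraphic fun a => if a ∈ S then g a - 1 else g a := by
  classical
  constructor
  · rintro ⟨G, _, hG⟩
    have hmax' : ∀ i ∈ S.map (Fin.succEmb n), ∀ j ∉ S.map (Fin.succEmb n), j ≠ 0 →
        (Fin.cons d g : Fin (n + 1) → ℕ) j ≤ (Fin.cons d g : Fin (n + 1) → ℕ) i := by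
      simp only [mem_map, Fin.coe_succEmb, forall_exists_index, and_imp,
        forall_apply_eq_imp_iff₂]
      intro a ha j hj hj0
      obtain ⟨b, rfl⟩ := Fin.exists_succ_eq.2 hj0
      simpa using hmax a ha b fun hb => hj ⟨b, hb, rfl⟩
    obtain ⟨G', _, hG'deg, hG'adj⟩ :=
      G.exists_adj_iff_mem_of_degree_eq (by simp) (by simp [hS]) hmax' hG
    refine ⟨G'.comap Fin.succ, inferInstance, fun a => ?_⟩
    have hadj : G'.Adj a.succ 0 ↔ a ∈ S := by rw [G'.adj_comm, hG'adj]; simp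
    have := G'.degree_fin_succ a
    simp only [hG'deg, hadj, Fin.cons_succ] at this
    dsimp only
    split_ifs at this ⊢ <;> omega
  · rintro ⟨H, _, hH⟩
    refine ⟨SimpleGraph.finCons S H, inferInstance, fun x => ?_⟩
    cases x using Fin.cases with
    | zero => simp [SimpleGraph.degree_finCons_zero, hS]
    | succ a =>
      simp only [SimpleGraph.degree_finCons_succ, hH, Fin.cons_succ]
      split_ifs with ha
      · exact Nat.sub_add_cancel (hpos a ha)
      · rfl

theorem List.map_take_append_drop_eq_ofFn {α : Type*} (f : α → α) (l : List α) (d : ℕ) :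
    (l.take d).map f ++ l.drop d =
      List.ofFn fun i : Fin l.length => if i.val < d then f l[i] else l[i] := by
  apply List.ext_getElem (by simp only [List.length_append, List.length_map, List.length_take,
    List.length_drop, List.length_ofFn]; omega)
  intro i h₁ h₂
  simp only [List.getElem_ofFn, List.getElem_append, List.length_map, List.length_take]
  split_ifs <;> simp_all <;> grind

theorem List.coe_cons_eq_map_univ {α : Type*} (d : α) (t : List α) :
    ((d :: t : List α) : Multiset α) =
      univ.val.map (Fin.cons d fun i : Fin t.length => t[i]) := by
  rw [Fin.univ_val_map, List.ofFn_succ]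
  simp

theorem havel_hakimi_general (d : ℕ) (t : List ℕ)
    (hsorted : List.Pairwise (· ≥ ·) (d :: t)) (hd : d ≤ t.length)
    (hpos : ∀ x ∈ t.take d, 0 < x) :
    Graphic (↑(d :: t) : Multiset ℕ) ↔
      Graphic (↑(((t.take d).map (· - 1) ++ t.drop d) : List ℕ) : Multiset ℕ) := by
  set S : Finset (Fin t.length) := {a | a.val < d}
  have hS : #S = d := by simp [S, Fin.card_filter_val_lt, hd]
  have hmax : ∀ a ∈ S, ∀ b ∉ S, t[b] ≤ t[a] := by
    intro a ha b hb
    simp only [S, mem_filter, mem_univ, true_and, not_lt] at ha hb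
    exact (List.pairwise_cons.1 hsorted).2.rel_get_of_lt (show a < b by omega)
  have htpos : ∀ a ∈ S, 0 < t[a] := by
    intro a ha
    simp only [S, mem_filter, mem_univ, true_and] at ha
    exact hpos _ (List.mem_iff_getElem.2 ⟨a, by simp; omega, by simp⟩)
  rw [List.coe_cons_eq_map_univ, List.map_take_append_drop_eq_ofFn, ← Fin.univ_val_map,
    graphic_map_univ_iff, graphic_map_univ_iff]
  convert isGraphic_cons_iff hS hmax htpos using 3
  simp [S]

/-- **Havel–Hakimi**: a sequence of `n > 1` nonnegative integers (listed in
decreasing order as `d :: t`, with largest element `d`) is graphic iff the sequence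
obtained by deleting `d` and subtracting `1` from the `d` next largest elements is graphic. -/
theorem havel_hakimi (d : ℕ) (t : List ℕ) (ht : t ≠ [])
    (hsorted : List.Pairwise (· ≥ ·) (d :: t)) (hd : d ≤ t.length)
    (hpos : ∀ x ∈ t.take d, 0 < x) :
    Graphic (↑(d :: t) : Multiset ℕ) ↔
      Graphic (↑(((t.take d).map (· - 1) ++ t.drop d) : List ℕ) : Multiset ℕ) :=
  havel_hakimi_general d t hsorted hd hpos
end

section
/- A graphic sequence π with n elements has a realization by a connected simple graph if and only if the smallest element of π is positive and the sum of the elements of π is at least 2(n−1). -/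
/-!
A connected graph on `n ≥ 2` vertices has no isolated vertex and at least `n - 1` edges.
Conversely, among the realizations of `π` take one whose reachability relation is maximal. If it
were disconnected, then having at least `n - 1` edges it is not a forest, so some edge `ab` is not
a bridge; since degrees are positive, another component contains an edge `cd`. The two-switch
replacing `ab, cd` by `ac, bd` preserves all degrees, keeps every connection because `a` and `b`
stay joined around the cycle through `ab`, and joins `a` to `c`, contradicting maximality.
-/

open SimpleGraph Finset

namespace SimpleGraph

variable {V : Type*}

lemma reachable_le_of_forall_adj {G H : SimpleGraph V}
    (h : ∀ ⦃x y⦄, G.Adj x y → H.Reachable x y) : G.Reachable ≤ H.Reachable := by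
  simp only [reachable_eq_reflTransGen] at h ⊢
  exact Relation.reflTransGen_closed h

lemma degree_eq_ncard_neighborSet (G : SimpleGraph V) (v : V) [Fintype (G.neighborSet v)] :
    G.degree v = (G.neighborSet v).ncard := by
  rw [← card_neighborSet_eq_degree, Set.ncard_eq_toFinset_card', Set.toFinset_card]

section Finite

variable [Fintype V] {G : SimpleGraph V}

lemma Connected.card_le_card_edgeFinset_add_one [Fintype G.edgeSet] (hG : G.Connected) :
    Fintype.card V ≤ #G.edgeFinset + 1 := by
  have := hG.card_vert_le_card_edgeSet_add_one
  rwa [Nat.card_eq_fintype_card, Nat.card_eq_fintype_card, ← edgeFinset_card] at this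

lemma IsAcyclic.card_edgeFinset_lt [Nonempty V] [Fintype G.edgeSet] (hG : G.IsAcyclic) :
    #G.edgeFinset < Fintype.card V := by
  obtain ⟨T, hGT, -, hT⟩ := connected_top.exists_isTree_le_of_le_of_isAcyclic le_top hG
  classical
  have := card_le_card (edgeFinset_mono hGT)
  have := hT.card_edgeFinset
  omega

lemma IsAcyclic.card_edgeFinset_add_one_lt [Fintype G.edgeSet] (hG : G.IsAcyclic)
    (hconn : ¬G.Preconnected) : #G.edgeFinset + 1 < Fintype.card V := by
  classical
  obtain ⟨u, v, huv⟩ : ∃ u v, ¬G.Reachable u v := by simpa [Preconnected] using hconn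
  have : Nonempty V := ⟨u⟩
  have hne : u ≠ v := by rintro rfl; exact huv .rfl
  have := (hG.sup_edge_of_not_reachable huv).card_edgeFinset_lt
  rw [G.card_edgeFinset_sup_edge (fun h ↦ huv h.reachable) hne] at this
  convert this

lemma exists_adj_not_isBridge_of_not_preconnected [Fintype G.edgeSet] (hconn : ¬G.Preconnected)
    (hcard : Fintype.card V ≤ #G.edgeFinset + 1) : ∃ a b, G.Adj a b ∧ ¬G.IsBridge s(a, b) := by
  have hcyc : ¬G.IsAcyclic := fun hG ↦ (hG.card_edgeFinset_add_one_lt hconn).not_ge hcard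
  simpa [isAcyclic_iff_forall_adj_isBridge] using hcyc

end Finite

def twoSwitch (G : SimpleGraph V) (a b c d : V) : SimpleGraph V :=
  G.deleteEdges {s(a, b), s(c, d)} ⊔ fromEdgeSet {s(a, c), s(b, d)}

section TwoSwitch

variable {G : SimpleGraph V} {a b c d : V}

lemma twoSwitch_adj {x y : V} :
    (G.twoSwitch a b c d).Adj x y ↔ (G.Adj x y ∧ s(x, y) ≠ s(a, b) ∧ s(x, y) ≠ s(c, d)) ∨
      ((s(x, y) = s(a, c) ∨ s(x, y) = s(b, d)) ∧ x ≠ y) := by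
  simp [twoSwitch]

lemma twoSwitch_reverse (G : SimpleGraph V) (a b c d : V) :
    G.twoSwitch a b c d = G.twoSwitch b a d c := by
  ext x y
  rw [twoSwitch_adj, twoSwitch_adj, Sym2.eq_swap (a := b) (b := a),
    Sym2.eq_swap (a := d) (b := c)]
  tauto

lemma twoSwitch_comm (G : SimpleGraph V) (a b c d : V) :
    G.twoSwitch a b c d = G.twoSwitch c d a b := by
  ext x y
  rw [twoSwitch_adj, twoSwitch_adj, Sym2.eq_swap (a := c) (b := a),
    Sym2.eq_swap (a := d) (b := b)]
  tauto

lemma twoSwitch_adj_left (hac : a ≠ c) : (G.twoSwitch a b c d).Adj a c :=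
  twoSwitch_adj.2 (.inr ⟨.inl rfl, hac⟩)

lemma neighborSet_twoSwitch_of_ne {v : V} (hva : v ≠ a) (hvb : v ≠ b) (hvc : v ≠ c)
    (hvd : v ≠ d) : (G.twoSwitch a b c d).neighborSet v = G.neighborSet v := by
  ext y
  simp [twoSwitch_adj, hva, hvb, hvc, hvd]

lemma neighborSet_twoSwitch_left (hab : G.Adj a b) (hac : a ≠ c) (had : a ≠ d) :
    (G.twoSwitch a b c d).neighborSet a = insert c (G.neighborSet a \ {b}) := by
  ext y
  simp only [mem_neighborSet, twoSwitch_adj, Set.mem_insert_iff, Set.mem_sdiff,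
    Set.mem_singleton_iff, Sym2.eq_iff]
  grind [G.loopless, hab.ne]

lemma ncard_neighborSet_twoSwitch_left [Finite V] (hab : G.Adj a b) (hnac : ¬G.Adj a c)
    (hac : a ≠ c) (had : a ≠ d) :
    ((G.twoSwitch a b c d).neighborSet a).ncard = (G.neighborSet a).ncard := by
  rw [neighborSet_twoSwitch_left hab hac had, Set.ncard_insert_of_notMem (fun h ↦ hnac h.1),
    Set.ncard_sdiff_singleton_add_one (show b ∈ G.neighborSet a from hab)]

lemma degree_twoSwitch [Finite V] (hab : G.Adj a b) (hcd : G.Adj c d) (hac : ¬G.Reachable a c)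
    (v : V) [Fintype (G.neighborSet v)] [Fintype ((G.twoSwitch a b c d).neighborSet v)] :
    (G.twoSwitch a b c d).degree v = G.degree v := by
  have had : ¬G.Reachable a d := fun h ↦ hac (h.trans hcd.symm.reachable)
  have hbc : ¬G.Reachable b c := fun h ↦ hac (hab.reachable.trans h)
  have hbd : ¬G.Reachable b d := fun h ↦ had (hab.reachable.trans h)
  have ne {x y : V} (h : ¬G.Reachable x y) : x ≠ y := by rintro rfl; exact h .rfl
  have nadj {x y : V} (h : ¬G.Reachable x y) : ¬G.Adj x y := fun h' ↦ h h'.reachable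
  rw [degree_eq_ncard_neighborSet, degree_eq_ncard_neighborSet]
  by_cases hva : v = a
  · subst hva
    exact ncard_neighborSet_twoSwitch_left hab (nadj hac) (ne hac) (ne had)
  by_cases hvb : v = b
  · subst hvb
    rw [twoSwitch_reverse]
    exact ncard_neighborSet_twoSwitch_left hab.symm (nadj hbd) (ne hbd) (ne hbc)
  by_cases hvc : v = c
  · subst hvc
    rw [twoSwitch_comm]
    exact ncard_neighborSet_twoSwitch_left hcd (fun h ↦ hac h.symm.reachable) (ne hac).symm
      (ne hbc).symm
  by_cases hvd : v = d
  · subst hvd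
    rw [twoSwitch_comm, twoSwitch_reverse]
    exact ncard_neighborSet_twoSwitch_left hcd.symm (fun h ↦ hbd h.symm.reachable)
      (ne hbd).symm (ne had).symm
  rw [neighborSet_twoSwitch_of_ne hva hvb hvc hvd]

lemma reachable_le_twoSwitch (hab : G.Adj a b) (hbr : ¬G.IsBridge s(a, b)) (hcd : G.Adj c d)
    (hac : ¬G.Reachable a c) : G.Reachable ≤ (G.twoSwitch a b c d).Reachable := by
  set H := G.twoSwitch a b c d
  have hba : H.Reachable a b := by
    classical
    obtain ⟨p⟩ : (G.deleteEdges {s(a, b)}).Reachable a b := by rwa [isBridge_iff, not_not] at hbr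
    -- `p` stays in the component of `a`, which does not contain `c`
    have hp : s(c, d) ∉ p.edges := fun h ↦
      hac ⟨(p.takeUntil c (p.fst_mem_support_of_mem_edges h)).mapLe (G.deleteEdges_le _)⟩
    refine (p.toDeleteEdge _ hp).reachable.mono fun x y hxy ↦ ?_
    simp only [deleteEdges_adj, Set.mem_singleton_iff] at hxy
    exact twoSwitch_adj.2 (.inl ⟨hxy.1.1, hxy.1.2, hxy.2⟩)
  have hcd' : H.Reachable c d := by
    have hac' : a ≠ c := by rintro rfl; exact hac .rfl
    have hbd' : b ≠ d := by rintro rfl; exact hac (hab.reachable.trans hcd.symm.reachable)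
    exact (twoSwitch_adj_left hac').reachable.symm.trans <| hba.trans
      (twoSwitch_adj.2 (.inr ⟨.inr rfl, hbd'⟩)).reachable
  refine reachable_le_of_forall_adj fun x y hxy ↦ ?_
  by_cases h₁ : s(x, y) = s(a, b)
  · rcases Sym2.eq_iff.1 h₁ with ⟨rfl, rfl⟩ | ⟨rfl, rfl⟩
    exacts [hba, hba.symm]
  by_cases h₂ : s(x, y) = s(c, d)
  · rcases Sym2.eq_iff.1 h₂ with ⟨rfl, rfl⟩ | ⟨rfl, rfl⟩
    exacts [hcd', hcd'.symm]
  exact (twoSwitch_adj.2 (.inl ⟨hxy, h₁, h₂⟩)).reachable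

end TwoSwitch

theorem exists_connected_degree_eq [Fintype V] [Nonempty V] (G : SimpleGraph V)
    [DecidableRel G.Adj] (hpos : ∀ v, 0 < G.degree v)
    (hcard : Fintype.card V ≤ #G.edgeFinset + 1) :
    ∃ (H : SimpleGraph V) (_ : DecidableRel H.Adj), (∀ v, H.degree v = G.degree v) ∧
      H.Connected := by
  classical
  obtain ⟨H, hHG, hmax⟩ := Set.Finite.exists_maximalFor Reachable
    {H : SimpleGraph V | ∀ v, H.degree v = G.degree v} (Set.toFinite _) ⟨G, fun _ ↦ by congr!⟩
  replace hHG : ∀ v, H.degree v = G.degree v := hHG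
  refine ⟨H, inferInstance, hHG, (connected_iff H).2 ⟨?_, ‹_›⟩⟩
  by_contra hconn
  have hedges : #H.edgeFinset = #G.edgeFinset := by
    have hH := H.sum_degrees_eq_twice_card_edges
    have hG := G.sum_degrees_eq_twice_card_edges
    simp only [hHG] at hH
    omega
  obtain ⟨a, b, hab, hbr⟩ := exists_adj_not_isBridge_of_not_preconnected hconn (hedges ▸ hcard)
  obtain ⟨c, hac⟩ : ∃ c, ¬H.Reachable a c := by
    obtain ⟨u, v, huv⟩ : ∃ u v, ¬H.Reachable u v := by simpa [Preconnected] using hconn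
    by_contra! h
    exact huv ((h u).symm.trans (h v))
  obtain ⟨d, hcd⟩ := (H.degree_pos_iff_exists_adj c).1 (hHG c ▸ hpos c)
  have hle := hmax (j := H.twoSwitch a b c d)
    (fun v ↦ (degree_twoSwitch hab hcd hac v).trans (hHG v))
    (reachable_le_twoSwitch hab hbr hcd hac)
  exact hac (hle _ _ (twoSwitch_adj_left (by rintro rfl; exact hac .rfl)).reachable)

end SimpleGraph

lemma mem_degSeq {n : ℕ} {G : SimpleGraph (Fin n)} [DecidableRel G.Adj] {d : ℕ} :
    d ∈ degSeq G ↔ ∃ v, G.degree v = d := by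
  simp [degSeq]

lemma sum_degSeq {n : ℕ} (G : SimpleGraph (Fin n)) [DecidableRel G.Adj] :
    (degSeq G).sum = 2 * #G.edgeFinset :=
  G.sum_degrees_eq_twice_card_edges

lemma degSeq_congr {n : ℕ} {G H : SimpleGraph (Fin n)} [DecidableRel G.Adj] [DecidableRel H.Adj]
    (h : ∀ v, H.degree v = G.degree v) : degSeq H = degSeq G :=
  Multiset.map_congr rfl fun v _ ↦ h v

/-- A graphic sequence `π` with `n > 1` elements has a connected realization iff the smallest
element of `π` is positive and the sum of the elements of `π` is at least `2(n-1)`. -/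
theorem connected_realization_iff (π : Multiset ℕ) (hn : 1 < Multiset.card π)
    (hg : Graphic π) :
    (∃ (G : SimpleGraph (Fin (Multiset.card π))) (_ : DecidableRel G.Adj),
        degSeq G = π ∧ G.Connected) ↔
      (∀ d ∈ π, 0 < d) ∧ 2 * (Multiset.card π - 1) ≤ π.sum := by
  have : Nontrivial (Fin (Multiset.card π)) := Fin.nontrivial_iff_two_le.2 hn
  constructor
  · rintro ⟨G, _, hπ, hG⟩
    refine ⟨fun d hd ↦ ?_, ?_⟩
    · obtain ⟨v, rfl⟩ := mem_degSeq.1 (hπ ▸ hd)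
      exact hG.preconnected.degree_pos_of_nontrivial v
    · have hsum := sum_degSeq G
      have hcard := hG.card_le_card_edgeFinset_add_one
      rw [hπ] at hsum
      rw [Fintype.card_fin] at hcard
      omega
  · rintro ⟨hpos, hsum⟩
    obtain ⟨G, _, hπ⟩ := hg
    have hdeg (v) : G.degree v ∈ π := by
      have := (mem_degSeq (G := G)).2 ⟨v, rfl⟩
      rwa [hπ] at this
    have hsumG := sum_degSeq G
    rw [hπ] at hsumG
    obtain ⟨H, _, hHG, hH⟩ := G.exists_connected_degree_eq (fun v ↦ hpos _ (hdeg v))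
      (by rw [Fintype.card_fin]; omega)
    exact ⟨H, _, (degSeq_congr hHG).trans hπ, hH⟩
end

section
/- Suppose the constant sequence π = (k,...,k) with n elements is graphic, where 2 ≤ k < n/2. Then π has a connected realization G such that the smallest nontrivial eigenvalue of the normalized Laplacian satisfies λ₁(G) ≤ 4/(|E(G)| − k). -/
/-!
Split `n = p + q` with `|p - q| ≤ 2`. On `ZMod p` and `ZMod q` take the circulant graphs with
jumps `±1, …, ±⌊k/2⌋` (plus the antipode when `k` is odd, which is why `p` and `q` must then be
even); both are `k`-regular. Delete the edge `{0, 1}` on each side and reconnect crosswise by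
`0 — 0` and `1 — 1`: degrees are unchanged, the graph stays connected, and exactly two edges
cross between the sides.

For a `k`-regular graph the normalized Laplacian is `L / k`, so `λ₁` is at most the Rayleigh
quotient `xᵀ L x / (k xᵀ x)` of any nonzero `x` orthogonal to the constants, which span the
kernel of `L` since the graph is connected. The vector equal to `q` on one side and `-p` on the
other gives `2 n² / (k p q n)`, and `4 p q ≥ n (n - 2)` turns this into `4 / (n k / 2 - k)`.
-/

open SimpleGraph Finset

open Matrix

theorem Fintype.exists_mul_sum_le_sum_mul {ι R : Type*} [Fintype ι] [Semiring R] [LinearOrder R]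
    [IsOrderedRing R] (μ w : ι → R) (hw : ∀ i, 0 ≤ w i) (hne : ∃ i, w i ≠ 0) :
    ∃ j, w j ≠ 0 ∧ μ j * ∑ i, w i ≤ ∑ i, μ i * w i := by
  classical
  obtain ⟨j, hj, hmin⟩ := (univ.filter (w · ≠ 0)).exists_min_image μ
    (by simpa [Finset.Nonempty] using hne)
  refine ⟨j, (mem_filter.mp hj).2, ?_⟩
  rw [mul_sum]
  refine sum_le_sum fun i _ => ?_
  by_cases hi : w i = 0
  · simp [hi]
  · exact mul_le_mul_of_nonneg_right (hmin i (by simpa using hi)) (hw i)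

namespace Matrix.IsHermitian

variable {V : Type*} [Fintype V] [DecidableEq V] {M : Matrix V V ℝ} (hM : M.IsHermitian)
include hM

lemma eq_sum_dotProduct_smul_eigenvectorBasis (x : V → ℝ) :
    x = ∑ j, (⇑(hM.eigenvectorBasis j) ⬝ᵥ x) • ⇑(hM.eigenvectorBasis j) := by
  have := congrArg WithLp.ofLp (hM.eigenvectorBasis.sum_repr' (WithLp.toLp 2 x))
  simp only [WithLp.ofLp_sum, WithLp.ofLp_smul, EuclideanSpace.inner_eq_star_dotProduct] at this
  simpa [dotProduct_comm] using this.symm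

lemma dotProduct_self_eq_sum_sq (x : V → ℝ) :
    x ⬝ᵥ x = ∑ j, (⇑(hM.eigenvectorBasis j) ⬝ᵥ x) ^ 2 := by
  have := hM.eigenvectorBasis.sum_sq_inner_right (WithLp.toLp 2 x)
  rw [← real_inner_self_eq_norm_sq] at this
  simp only [EuclideanSpace.inner_eq_star_dotProduct, star_trivial] at this
  simp_rw [← this, dotProduct_comm x]

lemma dotProduct_mulVec_eq_sum (x : V → ℝ) :
    x ⬝ᵥ (M *ᵥ x) = ∑ j, hM.eigenvalues j * (⇑(hM.eigenvectorBasis j) ⬝ᵥ x) ^ 2 := by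
  nth_rw 2 [hM.eq_sum_dotProduct_smul_eigenvectorBasis x]
  simp_rw [mulVec_sum, mulVec_smul, hM.mulVec_eigenvectorBasis, dotProduct_sum, dotProduct_smul,
    smul_eq_mul, dotProduct_comm x]
  exact sum_congr rfl fun j _ => by ring

/-- `x ⬝ᵥ M x` is the average of the eigenvalues weighted by the squared coordinates of `x` in
an eigenbasis, and orthogonality to the kernel puts no weight on the eigenvalue `0`. -/
lemma exists_mem_spectrum_ne_zero_mul_le {x : V → ℝ} (hx : x ≠ 0)
    (hker : ∀ v, M *ᵥ v = 0 → v ⬝ᵥ x = 0) :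
    ∃ μ ∈ spectrum ℝ M, μ ≠ 0 ∧ μ * (x ⬝ᵥ x) ≤ x ⬝ᵥ (M *ᵥ x) := by
  set c := fun j => ⇑(hM.eigenvectorBasis j) ⬝ᵥ x
  have hc : ∃ j, c j ^ 2 ≠ 0 := by
    by_contra! h
    refine hx ((hM.eq_sum_dotProduct_smul_eigenvectorBasis x).trans ?_)
    simp [c, fun j => pow_eq_zero_iff (n := 2) two_ne_zero |>.mp (h j)]
  obtain ⟨j, hj, hle⟩ := Fintype.exists_mul_sum_le_sum_mul hM.eigenvalues (c · ^ 2)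
    (fun _ => sq_nonneg _) hc
  refine ⟨hM.eigenvalues j, hM.eigenvalues_mem_spectrum_real j, fun h0 => hj ?_, ?_⟩
  · have := hker _ (by rw [hM.mulVec_eigenvectorBasis, h0, zero_smul])
    simp [c, this]
  · rwa [hM.dotProduct_self_eq_sum_sq, hM.dotProduct_mulVec_eq_sum]

end Matrix.IsHermitian

namespace SimpleGraph

section Laplacian

variable {V W : Type*} [Fintype V] [Fintype W] {G : SimpleGraph V} {G' : SimpleGraph W}
  [DecidableRel G.Adj] [DecidableRel G'.Adj]

lemma Connected.exists_mem_spectrum_lapMatrix_ne_zero_mul_le [DecidableEq V] (hG : G.Connected)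
    {x : V → ℝ} (hx0 : x ≠ 0) (hx : ∑ i, x i = 0) :
    ∃ μ ∈ spectrum ℝ (G.lapMatrix ℝ), μ ≠ 0 ∧ μ * (x ⬝ᵥ x) ≤ x ⬝ᵥ (G.lapMatrix ℝ *ᵥ x) := by
  refine (G.isHermitian_lapMatrix ℝ).exists_mem_spectrum_ne_zero_mul_le hx0 fun v hv => ?_
  obtain ⟨i₀⟩ := hG.nonempty
  have hconst : v = fun _ => v i₀ := funext fun i =>
    (lapMatrix_mulVec_eq_zero_iff_forall_reachable G).mp hv i i₀ (hG.preconnected i i₀)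
  rw [hconst, dotProduct, ← mul_sum, hx, mul_zero]

lemma IsRegularOfDegree.two_mul_card_edgeFinset {k : ℕ} (hG : G.IsRegularOfDegree k) :
    2 * #G.edgeFinset = Fintype.card V * k := by
  rw [← sum_degrees_eq_twice_card_edges, sum_congr rfl fun v _ => hG.degree_eq v, sum_const,
    card_univ, smul_eq_mul]

lemma IsRegularOfDegree.of_iso {k : ℕ} (hG : G.IsRegularOfDegree k) (φ : G ≃g G') :
    G'.IsRegularOfDegree k := fun v => by
  rw [← φ.apply_symm_apply v, φ.degree_eq, hG.degree_eq]

lemma Iso.dotProduct_lapMatrix_mulVec [DecidableEq V] [DecidableEq W] (φ : G ≃g G')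
    (x : V → ℝ) :
    (x ∘ φ.symm) ⬝ᵥ (G'.lapMatrix ℝ *ᵥ (x ∘ φ.symm)) = x ⬝ᵥ (G.lapMatrix ℝ *ᵥ x) := by
  simp only [← toLinearMap₂'_apply', lapMatrix_toLinearMap₂']
  rw [← φ.toEquiv.sum_comp]
  simp_rw [← φ.toEquiv.sum_comp (fun j => if G'.Adj _ j then _ else _)]
  simp [φ.map_adj_iff]

end Laplacian

end SimpleGraph

lemma normLap_eq_smul_lapMatrix {n k : ℕ} {G : SimpleGraph (Fin n)} [DecidableRel G.Adj]
    (hG : G.IsRegularOfDegree k) (hk : k ≠ 0) :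
    normLap G = (k : ℝ)⁻¹ • G.lapMatrix ℝ := by
  have hkR : (k : ℝ) ≠ 0 := by exact_mod_cast hk
  ext i j
  simp only [normLap, Matrix.of_apply, Matrix.smul_apply, lapMatrix, degMatrix, Matrix.sub_apply,
    Matrix.diagonal_apply, adjMatrix_apply, smul_eq_mul, hG.degree_eq, if_neg hk]
  by_cases hij : i = j
  · subst hij
    simp [hkR]
  · by_cases hadj : G.Adj i j
    · simp [hij, hadj, ← Real.sqrt_mul (Nat.cast_nonneg k), ← sq]
    · simp [hij, hadj]

lemma lambda1_le_of_isRegularOfDegree {n k : ℕ} {G : SimpleGraph (Fin n)} [DecidableRel G.Adj]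
    (hc : G.Connected) (hG : G.IsRegularOfDegree k) (hk : k ≠ 0) {x : Fin n → ℝ}
    (hx0 : x ≠ 0) (hx : ∑ i, x i = 0) :
    lambda1 G ≤ x ⬝ᵥ (G.lapMatrix ℝ *ᵥ x) / (k * (x ⬝ᵥ x)) := by
  obtain ⟨μ, hμ, hμ0, hle⟩ := hc.exists_mem_spectrum_lapMatrix_ne_zero_mul_le hx0 hx
  have hkR : (0 : ℝ) < k := by positivity
  have hxx : 0 < x ⬝ᵥ x := lt_of_le_of_ne (sum_nonneg fun i _ => mul_self_nonneg (x i))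
    (Ne.symm (dotProduct_self_eq_zero.not.mpr hx0))
  have hmem : (k : ℝ)⁻¹ * μ ∈ spectrum ℝ (normLap G) := by
    have h := spectrum.unit_smul_eq_smul (G.lapMatrix ℝ) (Units.mk0 _ (inv_ne_zero hkR.ne'))
    simp only [Units.smul_def, Units.val_mk0] at h
    rw [normLap_eq_smul_lapMatrix hG hk, h]
    exact Set.smul_mem_smul_set hμ
  calc lambda1 G ≤ (k : ℝ)⁻¹ * μ :=
        csInf_le (Matrix.finite_real_spectrum.subset fun _ h => h.2).bddBelow
          ⟨mul_ne_zero (inv_ne_zero hkR.ne') hμ0, hmem⟩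
    _ ≤ x ⬝ᵥ (G.lapMatrix ℝ *ᵥ x) / (k * (x ⬝ᵥ x)) := by
        rw [le_div_iff₀ (mul_pos hkR hxx)]
        calc (k : ℝ)⁻¹ * μ * (k * (x ⬝ᵥ x)) = μ * (x ⬝ᵥ x) := by field_simp
          _ ≤ _ := hle

lemma degSeq_eq_replicate {n k : ℕ} {G : SimpleGraph (Fin n)} [DecidableRel G.Adj]
    (hG : G.IsRegularOfDegree k) : degSeq G = Multiset.replicate n k :=
  Multiset.eq_replicate.mpr ⟨by simp [degSeq], fun d hd => by
    obtain ⟨v, -, rfl⟩ := Multiset.mem_map.mp hd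
    exact hG.degree_eq v⟩

lemma Graphic.even_sum {π : Multiset ℕ} (h : Graphic π) : Even π.sum := by
  obtain ⟨G, _, hG⟩ := h
  rw [← hG, degSeq, ← sum_eq_multiset_sum, sum_degrees_eq_twice_card_edges]
  exact even_two_mul _

lemma sum_sum_ite_or_eq_two_mul {α β : Type*} [Fintype α] [Fintype β] [DecidableEq α]
    [DecidableEq β] {a₀ a₁ : α} (ha : a₀ ≠ a₁) (b₀ b₁ : β) (C : ℝ) :
    ∑ x, ∑ y, (if x = a₀ ∧ y = b₀ ∨ x = a₁ ∧ y = b₁ then C else 0) = 2 * C := by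
  rw [← Fintype.sum_prod_type']
  simp_rw [← Prod.mk.injEq, Prod.mk.eta, sum_ite, sum_const_zero, add_zero, sum_const,
    filter_or, filter_eq', mem_univ, if_true]
  rw [card_union_of_disjoint (by simp [ha]), card_singleton, card_singleton]
  norm_num

namespace SimpleGraph

section switchSum

variable {α β : Type*} (G : SimpleGraph α) (H : SimpleGraph β) (a₀ a₁ : α) (b₀ b₁ : β)

def switchSum : SimpleGraph (α ⊕ β) :=
  (G.deleteEdges {s(a₀, a₁)} ⊕g H.deleteEdges {s(b₀, b₁)}) ⊔ edge (.inl a₀) (.inr b₀) ⊔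
    edge (.inl a₁) (.inr b₁)

variable {G H a₀ a₁ b₀ b₁}

@[simp] lemma switchSum_adj_inl_inl {x x' : α} :
    (switchSum G H a₀ a₁ b₀ b₁).Adj (.inl x) (.inl x') ↔ G.Adj x x' ∧ s(x, x') ≠ s(a₀, a₁) := by
  simp [switchSum, edge_adj]

@[simp] lemma switchSum_adj_inr_inr {y y' : β} :
    (switchSum G H a₀ a₁ b₀ b₁).Adj (.inr y) (.inr y') ↔ H.Adj y y' ∧ s(y, y') ≠ s(b₀, b₁) := by
  simp [switchSum, edge_adj]

@[simp] lemma switchSum_adj_inl_inr {x : α} {y : β} :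
    (switchSum G H a₀ a₁ b₀ b₁).Adj (.inl x) (.inr y) ↔ x = a₀ ∧ y = b₀ ∨ x = a₁ ∧ y = b₁ := by
  simp [switchSum, edge_adj]

@[simp] lemma switchSum_adj_inr_inl {x : α} {y : β} :
    (switchSum G H a₀ a₁ b₀ b₁).Adj (.inr y) (.inl x) ↔ x = a₀ ∧ y = b₀ ∨ x = a₁ ∧ y = b₁ := by
  rw [adj_comm, switchSum_adj_inl_inr]

lemma switchSum_swap : switchSum G H a₀ a₁ b₀ b₁ = switchSum G H a₁ a₀ b₁ b₀ := by
  ext (x | y) (x' | y') <;> simp [Sym2.eq_swap (a := a₀), Sym2.eq_swap (a := b₀), or_comm]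

def Iso.switchSumComm : switchSum G H a₀ a₁ b₀ b₁ ≃g switchSum H G b₀ b₁ a₀ a₁ where
  toEquiv := Equiv.sumComm α β
  map_rel_iff' {u v} := by rcases u with x | y <;> rcases v with x' | y' <;> simp [and_comm]

lemma neighborFinset_switchSum_inl_left [DecidableEq α] [DecidableEq β]
    [Fintype (G.neighborSet a₀)] [Fintype ((switchSum G H a₀ a₁ b₀ b₁).neighborSet (.inl a₀))]
    (h : G.Adj a₀ a₁) :
    (switchSum G H a₀ a₁ b₀ b₁).neighborFinset (.inl a₀) =
      insert (.inr b₀) (((G.neighborFinset a₀).erase a₁).map .inl) := by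
  ext (x | y) <;> simp [h.ne, and_comm]

lemma neighborFinset_switchSum_inl_of_ne {x : α} (hx₀ : x ≠ a₀) (hx₁ : x ≠ a₁)
    [Fintype (G.neighborSet x)] [Fintype ((switchSum G H a₀ a₁ b₀ b₁).neighborSet (.inl x))] :
    (switchSum G H a₀ a₁ b₀ b₁).neighborFinset (.inl x) = (G.neighborFinset x).map .inl := by
  ext (x' | y) <;> simp [hx₀, hx₁]

lemma degree_switchSum_inl_left [DecidableEq α] [DecidableEq β] (h : G.Adj a₀ a₁)
    [Fintype (G.neighborSet a₀)] [Fintype ((switchSum G H a₀ a₁ b₀ b₁).neighborSet (.inl a₀))] :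
    (switchSum G H a₀ a₁ b₀ b₁).degree (.inl a₀) = G.degree a₀ := by
  rw [← card_neighborFinset_eq_degree, neighborFinset_switchSum_inl_left h, card_insert_of_notMem
    (by simp), card_map, card_erase_of_mem (by simpa using h), card_neighborFinset_eq_degree,
    Nat.sub_add_cancel h.degree_pos_left]

lemma degree_switchSum_inl [DecidableEq α] [DecidableEq β] (h : G.Adj a₀ a₁) (x : α)
    [Fintype (G.neighborSet x)] [Fintype ((switchSum G H a₀ a₁ b₀ b₁).neighborSet (.inl x))] :
    (switchSum G H a₀ a₁ b₀ b₁).degree (.inl x) = G.degree x := by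
  by_cases hx₀ : x = a₀
  · subst hx₀
    exact degree_switchSum_inl_left h
  by_cases hx₁ : x = a₁
  · subst hx₁
    have : Fintype ((switchSum G H x a₀ b₁ b₀).neighborSet (.inl x)) := by
      rwa [← switchSum_swap]
    convert degree_switchSum_inl_left (H := H) (b₀ := b₁) (b₁ := b₀) h.symm using 2
    exact switchSum_swap
  rw [← card_neighborFinset_eq_degree, neighborFinset_switchSum_inl_of_ne hx₀ hx₁, card_map,
    card_neighborFinset_eq_degree]

lemma IsRegularOfDegree.switchSum [Fintype α] [Fintype β] [DecidableEq α] [DecidableEq β]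
    [DecidableRel G.Adj] [DecidableRel H.Adj] [DecidableRel (switchSum G H a₀ a₁ b₀ b₁).Adj]
    {k : ℕ} (hG : G.IsRegularOfDegree k) (hH : H.IsRegularOfDegree k) (ha : G.Adj a₀ a₁)
    (hb : H.Adj b₀ b₁) : (switchSum G H a₀ a₁ b₀ b₁).IsRegularOfDegree k := by
  classical
  rintro (x | y)
  · rw [degree_switchSum_inl ha, hG.degree_eq]
  · rw [← Iso.switchSumComm.degree_eq]
    exact (degree_switchSum_inl hb y).trans (hH.degree_eq y)

lemma Connected.switchSum (hG : (G.deleteEdges {s(a₀, a₁)}).Connected)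
    (hH : (H.deleteEdges {s(b₀, b₁)}).Connected) : (switchSum G H a₀ a₁ b₀ b₁).Connected :=
  (hG.sum_sup_edge hH).mono le_sup_left

lemma dotProduct_lapMatrix_switchSum_mulVec [Fintype α] [Fintype β] [DecidableEq α]
    [DecidableEq β] [DecidableRel (switchSum G H a₀ a₁ b₀ b₁).Adj] (ha : a₀ ≠ a₁) (c d : ℝ) :
    Sum.elim (fun _ => c) (fun _ => d) ⬝ᵥ
      ((switchSum G H a₀ a₁ b₀ b₁).lapMatrix ℝ *ᵥ Sum.elim (fun _ => c) (fun _ => d)) =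
      2 * (c - d) ^ 2 := by
  rw [← Matrix.toLinearMap₂'_apply', lapMatrix_toLinearMap₂']
  simp only [Fintype.sum_sum_type, Sum.elim_inl, Sum.elim_inr, switchSum_adj_inl_inl,
    switchSum_adj_inl_inr, switchSum_adj_inr_inl, switchSum_adj_inr_inr, sub_self, ne_eq,
    OfNat.ofNat_ne_zero, not_false_eq_true, zero_pow, ite_self, sum_const_zero, zero_add, add_zero]
  rw [sum_comm (s := (univ : Finset β)), sum_sum_ite_or_eq_two_mul ha,
    sum_sum_ite_or_eq_two_mul ha]
  ring

end switchSum

section circulant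

variable {A : Type*} [AddCommGroup A] {S : Finset A}

lemma neighborFinset_circulantGraph (h0 : 0 ∉ S) (hS : ∀ s ∈ S, -s ∈ S) (x : A)
    [Fintype ((circulantGraph (S : Set A)).neighborSet x)] :
    (circulantGraph (S : Set A)).neighborFinset x = S.map (addLeftEmbedding x) := by
  ext y
  simp only [mem_neighborFinset, circulantGraph_adj, mem_coe, mem_map, addLeftEmbedding_apply]
  constructor
  · rintro ⟨-, h | h⟩
    · exact ⟨-(x - y), hS _ h, by abel⟩
    · exact ⟨y - x, h, by abel⟩
  · rintro ⟨s, hs, rfl⟩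
    refine ⟨fun h => h0 ?_, Or.inr (by simpa using hs)⟩
    obtain rfl : s = 0 := by simpa using h
    exact hs

lemma isRegularOfDegree_circulantGraph [Fintype A] [DecidableRel (circulantGraph (S : Set A)).Adj]
    (h0 : 0 ∉ S) (hS : ∀ s ∈ S, -s ∈ S) :
    (circulantGraph (S : Set A)).IsRegularOfDegree S.card := fun x => by
  rw [← card_neighborFinset_eq_degree, neighborFinset_circulantGraph h0 hS, card_map]

end circulant

lemma connected_deleteEdges_zero_one {m : ℕ} (hm : 3 ≤ m) {G : SimpleGraph (ZMod m)}
    (h : ∀ x, G.Adj x (x + 1)) : (G.deleteEdges {s(0, 1)}).Connected := by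
  have hreach : ∀ i, 1 ≤ i → i ≤ m → (G.deleteEdges {s(0, 1)}).Reachable 1 (i : ZMod m) := by
    intro i hi₁ him
    induction i, hi₁ using Nat.le_induction with
    | base => simp
    | succ i hi ih =>
      refine (ih (by omega)).trans (Adj.reachable ?_)
      rw [deleteEdges_adj, Nat.cast_succ]
      refine ⟨h i, ?_⟩
      have hi0 : (i : ZMod m) ≠ 0 := by
        rw [ne_eq, ZMod.natCast_eq_zero_iff]
        exact Nat.not_dvd_of_pos_of_lt (by omega) (by omega)
      simp only [Set.mem_singleton_iff, Sym2.eq, Sym2.rel_iff', Prod.mk.injEq, hi0,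
        false_and, Prod.swap_prod_mk, false_or, not_and]
      intro h₁ h₂
      rw [h₁, one_add_one_eq_two, ← Nat.cast_ofNat, ZMod.natCast_eq_zero_iff] at h₂
      exact absurd (Nat.le_of_dvd two_pos h₂) (by omega)
  have : NeZero m := ⟨by omega⟩
  refine connected_iff_exists_forall_reachable _ |>.mpr ⟨1, fun x => ?_⟩
  by_cases hx : x = 0
  · simpa [hx] using hreach m (by omega) le_rfl
  · simpa using hreach x.val (by simpa [Nat.one_le_iff_ne_zero] using hx) x.val_lt.le

end SimpleGraph

lemma ZMod.intCast_injOn_Ico {m : ℕ} (a : ℤ) :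
    Set.InjOn (Int.cast : ℤ → ZMod m) (Set.Ico a (a + m)) := by
  intro s hs t ht hst
  rw [← sub_eq_zero, ← Int.cast_sub, ZMod.intCast_zmod_eq_zero_iff_dvd] at hst
  simp only [Set.mem_Ico] at hs ht
  exact sub_eq_zero.mp (Int.eq_zero_of_abs_lt_dvd hst (abs_lt.mpr ⟨by omega, by omega⟩))

noncomputable def jumpReps (m k : ℕ) : Finset ℤ :=
  (Icc (-(k / 2 : ℕ) : ℤ) (k / 2 : ℕ)).erase 0 ∪ if Odd k then {(m : ℤ) / 2} else ∅

noncomputable def jumps (m k : ℕ) : Finset (ZMod m) := (jumpReps m k).image Int.cast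

section jumps

variable {m k : ℕ}

lemma mem_jumpReps {t : ℤ} : t ∈ jumpReps m k ↔
    (t ≠ 0 ∧ -(k / 2 : ℕ) ≤ t ∧ t ≤ (k / 2 : ℕ)) ∨ (Odd k ∧ t = m / 2) := by
  unfold jumpReps
  split_ifs with hk <;> simp [hk, or_comm]

lemma insert_zero_jumpReps_subset_Ico (hkm : k < m) (hpar : Odd k → Even m) :
    ↑(insert 0 (jumpReps m k)) ⊆ Set.Ico (-(k / 2 : ℕ) : ℤ) (-(k / 2 : ℕ) + m) := by
  intro t ht
  rw [coe_insert, Set.mem_insert_iff, mem_coe, mem_jumpReps] at ht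
  rw [Set.mem_Ico]
  rcases ht with rfl | ⟨-, ht⟩ | ⟨hodd, rfl⟩
  · omega
  · omega
  · have := Nat.even_iff.mp (hpar hodd)
    have := Nat.odd_iff.mp hodd
    omega

lemma card_jumpReps (hkm : k < m) (hpar : Odd k → Even m) : (jumpReps m k).card = k := by
  unfold jumpReps
  split_ifs with hodd
  · have := Nat.even_iff.mp (hpar hodd)
    have := Nat.odd_iff.mp hodd
    rw [card_union_of_disjoint
        (disjoint_singleton_right.mpr (by simp only [mem_erase, mem_Icc]; omega)), card_singleton,
      card_erase_of_mem (by simp only [mem_Icc]; omega), Int.card_Icc]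
    omega
  · have := Nat.even_iff.mp (Nat.not_odd_iff_even.mp hodd)
    rw [union_empty, card_erase_of_mem (by simp only [mem_Icc]; omega), Int.card_Icc]
    omega

lemma one_mem_jumps (hk : 2 ≤ k) : (1 : ZMod m) ∈ jumps m k :=
  mem_image.mpr ⟨1, mem_jumpReps.mpr (Or.inl (by omega)), Int.cast_one⟩

lemma zero_notMem_jumps (hkm : k < m) (hpar : Odd k → Even m) : (0 : ZMod m) ∉ jumps m k := by
  intro h
  obtain ⟨t, ht, h0⟩ := mem_image.mp h
  obtain rfl : t = 0 := (ZMod.intCast_injOn_Ico _).mono (insert_zero_jumpReps_subset_Ico hkm hpar)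
    (by simp [ht]) (by simp) (h0.trans Int.cast_zero.symm)
  rcases mem_jumpReps.mp ht with ⟨h, -⟩ | ⟨hodd, h⟩
  · exact h rfl
  · have := Nat.even_iff.mp (hpar hodd)
    have := Nat.odd_iff.mp hodd
    omega

lemma neg_mem_jumps (hpar : Odd k → Even m) {x : ZMod m} (hx : x ∈ jumps m k) :
    -x ∈ jumps m k := by
  obtain ⟨t, ht, rfl⟩ := mem_image.mp hx
  rcases mem_jumpReps.mp ht with ⟨h0, hlo, hhi⟩ | ⟨hodd, rfl⟩
  · exact mem_image.mpr ⟨-t, mem_jumpReps.mpr (Or.inl (by omega)), Int.cast_neg t⟩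
  · have hm : (m : ℤ) = m / 2 + m / 2 := by
      have := Nat.even_iff.mp (hpar hodd)
      omega
    refine mem_image.mpr ⟨m / 2, ht, ?_⟩
    rw [eq_neg_iff_add_eq_zero, ← Int.cast_add, ← hm, Int.cast_natCast, ZMod.natCast_self]

lemma card_jumps (hkm : k < m) (hpar : Odd k → Even m) : (jumps m k).card = k := by
  rw [jumps, card_image_of_injOn ((ZMod.intCast_injOn_Ico _).mono
    ((coe_subset.mpr (subset_insert 0 _)).trans (insert_zero_jumpReps_subset_Ico hkm hpar))),
    card_jumpReps hkm hpar]

lemma isRegularOfDegree_circulantGraph_jumps [NeZero m]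
    [DecidableRel (circulantGraph (jumps m k : Set (ZMod m))).Adj] (hkm : k < m)
    (hpar : Odd k → Even m) : (circulantGraph (jumps m k : Set (ZMod m))).IsRegularOfDegree k := by
  simpa [card_jumps hkm hpar] using
    isRegularOfDegree_circulantGraph (zero_notMem_jumps hkm hpar) fun _ => neg_mem_jumps hpar

lemma circulantGraph_jumps_adj_add_one [Fact (1 < m)] (hk : 2 ≤ k) (x : ZMod m) :
    (circulantGraph (jumps m k : Set (ZMod m))).Adj x (x + 1) := by
  simp [one_mem_jumps hk]

end jumps

lemma lambda1_le_of_iso_switchSum {α β : Type*} [Fintype α] [Fintype β] [DecidableEq α]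
    [DecidableEq β] {G₁ : SimpleGraph α} {G₂ : SimpleGraph β} {a₀ a₁ : α} {b₀ b₁ : β}
    (ha : a₀ ≠ a₁) {n k : ℕ} {G : SimpleGraph (Fin n)} [DecidableRel G.Adj]
    (φ : switchSum G₁ G₂ a₀ a₁ b₀ b₁ ≃g G) (hc : G.Connected) (hG : G.IsRegularOfDegree k)
    (hk : k ≠ 0) :
    lambda1 G ≤ 2 * (Fintype.card α + Fintype.card β) /
      (k * (Fintype.card α * Fintype.card β)) := by
  classical
  have : Nonempty α := ⟨a₀⟩
  have : Nonempty β := ⟨b₀⟩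
  have hp : (Fintype.card α : ℝ) ≠ 0 := by positivity
  have hq : (Fintype.card β : ℝ) ≠ 0 := by positivity
  set f : α ⊕ β → ℝ := Sum.elim (fun _ => (Fintype.card β : ℝ)) (fun _ => -(Fintype.card α : ℝ))
  have hsum (g : α ⊕ β → ℝ) : ∑ i, g (φ.symm i) = ∑ a, g a := φ.symm.toEquiv.sum_comp g
  have hf0 : f ∘ φ.symm ≠ 0 := fun h => hq (by simpa [f] using congrFun h (φ (.inl a₀)))
  have hfsum : ∑ i, (f ∘ φ.symm) i = 0 := by simp [hsum, f, Fintype.sum_sum_type, mul_comm]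
  have hff : (f ∘ φ.symm) ⬝ᵥ (f ∘ φ.symm) =
      Fintype.card α * Fintype.card β * (Fintype.card α + Fintype.card β) := by
    simp only [dotProduct, Function.comp_apply, hsum (fun a => f a * f a), Fintype.sum_sum_type,
      Sum.elim_inl, Sum.elim_inr, sum_const, card_univ, nsmul_eq_mul, f]
    ring
  calc lambda1 G ≤ _ := lambda1_le_of_isRegularOfDegree hc hG hk hf0 hfsum
    _ = _ := by
      rw [φ.dotProduct_lapMatrix_mulVec, dotProduct_lapMatrix_switchSum_mulVec ha, hff]
      field_simp
      ring

lemma exists_balanced_split {n k : ℕ} (hn : 2 * k + 2 ≤ n) (hpar : Even (n * k)) :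
    ∃ p q, p + q = n ∧ k + 1 ≤ p ∧ p ≤ q ∧ q ≤ p + 2 ∧ (Odd k → Even p ∧ Even q) := by
  rcases Nat.even_or_odd k with hk | hk
  · exact ⟨n / 2, n - n / 2, by omega, by omega, by omega, by omega,
      fun h => absurd hk (Nat.not_even_iff_odd.mpr h)⟩
  · have hn2 := Nat.even_iff.mp <|
      (Nat.even_mul.mp hpar).resolve_right (Nat.not_even_iff_odd.mpr hk)
    have hk2 := Nat.odd_iff.mp hk
    refine ⟨2 * (n / 4), n - 2 * (n / 4), by omega, by omega, by omega, by omega,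
      fun _ => ⟨?_, ?_⟩⟩ <;> rw [Nat.even_iff] <;> omega

lemma div_le_four_div_of_balanced {p q k : ℝ} (hk : 0 < k) (hp : k + 1 ≤ p) (hpq : p ≤ q)
    (hqp : q ≤ p + 2) :
    2 * (p + q) / (k * (p * q)) ≤ 4 / ((p + q) * k / 2 - k) := by
  have hp0 : 0 < p := by linarith
  have hq0 : 0 < q := by linarith
  -- `4 p q = (p + q) ^ 2 - (q - p) ^ 2`, so the claim reduces to this
  have hsq : (q - p) ^ 2 ≤ 2 * (p + q) := by nlinarith
  rw [div_le_div_iff₀ (by positivity) (by nlinarith)]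
  nlinarith [mul_le_mul_of_nonneg_left hsq hk.le]

/-- If the constant sequence `(k,...,k)` with `n` elements, `2 ≤ k < n/2`, is graphic,
then it has a connected realization `G` with `λ₁(G) ≤ 4/(|E(G)| - k)`. -/
theorem regular_poor_sync (n k : ℕ) (hk : 2 ≤ k) (hkn : k < n / 2)
    (hg : Graphic (Multiset.replicate n k)) :
    ∃ (G : SimpleGraph (Fin n)) (_ : DecidableRel G.Adj),
      degSeq G = Multiset.replicate n k ∧ G.Connected ∧
      lambda1 G ≤ 4 / ((G.edgeFinset.card : ℝ) - (k : ℝ)) := by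
  classical
  obtain ⟨p, q, rfl, hp, hpq, hqp, hpar⟩ :=
    exists_balanced_split (n := n) (k := k) (by omega) (by simpa using hg.even_sum)
  have : Fact (1 < p) := ⟨by omega⟩
  have : Fact (1 < q) := ⟨by omega⟩
  set H := switchSum (circulantGraph (jumps p k : Set (ZMod p)))
    (circulantGraph (jumps q k : Set (ZMod q))) 0 1 0 1
  have hH : H.IsRegularOfDegree k :=
    .switchSum (isRegularOfDegree_circulantGraph_jumps (by omega) fun h => (hpar h).1)
      (isRegularOfDegree_circulantGraph_jumps (by omega) fun h => (hpar h).2)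
      (by simpa using circulantGraph_jumps_adj_add_one hk (0 : ZMod p))
      (by simpa using circulantGraph_jumps_adj_add_one hk (0 : ZMod q))
  have hHc : H.Connected :=
    .switchSum (connected_deleteEdges_zero_one (by omega) (circulantGraph_jumps_adj_add_one hk))
      (connected_deleteEdges_zero_one (by omega) (circulantGraph_jumps_adj_add_one hk))
  let e : ZMod p ⊕ ZMod q ≃ Fin (p + q) := Fintype.equivFinOfCardEq (by simp [ZMod.card])
  have hG := hH.of_iso (Iso.map e H)
  have hGc := (Iso.map e H).connected_iff.mp hHc
  have hE : (2 * #(H.map e).edgeFinset : ℝ) = (p + q) * k := by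
    exact_mod_cast hG.two_mul_card_edgeFinset.trans (by simp)
  refine ⟨_, inferInstance, degSeq_eq_replicate hG, hGc, ?_⟩
  calc lambda1 _ ≤ 2 * (p + q) / (k * (p * q)) := by
        simpa using lambda1_le_of_iso_switchSum zero_ne_one (Iso.map e H) hGc hG (by omega)
    _ ≤ 4 / ((p + q) * k / 2 - k) := div_le_four_div_of_balanced (by positivity)
        (by exact_mod_cast hp) (by exact_mod_cast hpq) (by exact_mod_cast hqp)
    _ = _ := by rw [← hE]; ring_nf
end

section
/- In the lay-on process applied to a nonnegative integer sequence s, the total number z of new elements equal to 1 that are added has the same parity as the sum of the elements of s: if the sum of elements of s is even (resp. odd), then z is even (resp. odd). -/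
open SimpleGraph Finset

/-- One step of the lay-on process: sort the sequence in decreasing order; if the largest
element is `d` and there are `p` positive elements, add `a = d + 1 - p` new elements equal to
`1` (i.e. `a = 0` if `d ≤ p - 1`); then delete `d` and subtract `1` from the `d` next largest
elements. Returns the number of added ones together with the resulting sequence. -/
def layOnStep (l : List ℕ) : ℕ × List ℕ :=
  match l.insertionSort (· ≥ ·) with
  | [] => (0, [])
  | d :: t =>
    let p := (d :: t).countP (fun x => 0 < x)
    let a := d + 1 - p
    let t' := (t ++ List.replicate a 1).insertionSort (· ≥ ·)
    (a, (t'.take d).map (· - 1) ++ t'.drop d)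

/-- Fueled recursion computing the total number of ones added during the lay-on process. -/
def layOnZAux : ℕ → List ℕ → ℕ
  | 0, _ => 0
  | fuel + 1, l =>
    if l.all (· == 0) then 0
    else (layOnStep l).1 + layOnZAux fuel (layOnStep l).2

/-- The total number `z` of new elements equal to `1` added by the lay-on process applied to
`l`. (The sum of the sequence strictly decreases at each step, so fuel `l.sum + 1` suffices.) -/
def layOnZ (l : List ℕ) : ℕ := layOnZAux (l.sum + 1) l

/-!
A step with largest element `d` that adds `a` ones deletes `d` and lowers `d` further entries by
one, so the sum of the sequence changes by `a - 2d`, which has the parity of `a`. Summing over all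
steps, `z` has the parity of the initial sum minus the final sum `0`. The added ones guarantee that
the `d` lowered entries are positive, so no subtraction is truncated; and since `0 < d` and
`a ≤ d`, the sum strictly decreases, so the process ends within the fuel `l.sum + 1`.
-/

theorem List.pos_of_mem_take_of_le_countP {l : List ℕ} (hl : l.Pairwise (· ≥ ·)) {d : ℕ}
    (hd : d ≤ l.countP (0 < ·)) {x : ℕ} (hx : x ∈ l.take d) : 0 < x := by
  induction l generalizing d with
  | nil => simp at hx
  | cons a t ih =>
    obtain ⟨hat, ht⟩ := List.pairwise_cons.mp hl
    cases d with
    | zero => simp at hx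
    | succ d =>
      have ha : 0 < a := by
        by_contra! ha0
        have : t.countP (0 < ·) = 0 :=
          List.countP_eq_zero.mpr fun y hy => by simpa using (hat y hy).trans ha0
        simp [this, ha0] at hd
      rw [List.take_succ_cons, List.mem_cons] at hx
      rcases hx with rfl | hx
      · exact ha
      · exact ih ht (by simpa [List.countP_cons, ha] using hd) hx

theorem List.sum_map_pred_add_length {l : List ℕ} (h : ∀ x ∈ l, 0 < x) :
    (l.map (· - 1)).sum + l.length = l.sum := by
  induction l with
  | nil => simp
  | cons a t ih =>
    have ha := h a List.mem_cons_self
    have := ih fun x hx => h x (List.mem_cons_of_mem a hx)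
    simp only [List.map_cons, List.sum_cons, List.length_cons]
    omega

theorem List.sum_map_pred_take_append_drop {l : List ℕ} (hl : l.Pairwise (· ≥ ·)) {d : ℕ}
    (hd : d ≤ l.countP (0 < ·)) :
    ((l.take d).map (· - 1) ++ l.drop d).sum + d = l.sum := by
  have hlen : (l.take d).length = d :=
    List.length_take_of_le (hd.trans List.countP_le_length)
  have := List.sum_map_pred_add_length fun x hx => List.pos_of_mem_take_of_le_countP hl hd hx
  calc ((l.take d).map (· - 1) ++ l.drop d).sum + d
      = ((l.take d).map (· - 1)).sum + (l.take d).length + (l.drop d).sum := by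
        rw [List.sum_append, hlen]; ring
    _ = l.sum := by rw [this, ← List.sum_append, List.take_append_drop]

theorem layOnStep_sum {l : List ℕ} (h : l.sum ≠ 0) :
    ∃ d, 0 < d ∧ (layOnStep l).1 ≤ d ∧
      (layOnStep l).2.sum + 2 * d = l.sum + (layOnStep l).1 := by
  have hperm := l.perm_insertionSort (· ≥ ·)
  have hsorted := l.pairwise_insertionSort (· ≥ ·)
  rcases hm : l.insertionSort (· ≥ ·) with _ | ⟨d, t⟩
  · simp_all
  rw [hm] at hperm hsorted
  have hsum : l.sum = d + t.sum := by rw [← hperm.sum_eq, List.sum_cons]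
  have hd : 0 < d := by
    by_contra! hd0
    have : t.sum = 0 := List.sum_eq_zero fun y hy => by
      have := (List.pairwise_cons.mp hsorted).1 y hy; omega
    omega
  have hp : (d :: t).countP (0 < ·) = t.countP (0 < ·) + 1 := by simp [hd]
  obtain ⟨a, ha⟩ : ∃ a, d + 1 - (d :: t).countP (0 < ·) = a := ⟨_, rfl⟩
  obtain ⟨t', ht'⟩ : ∃ t', (t ++ List.replicate a 1).insertionSort (· ≥ ·) = t' := ⟨_, rfl⟩
  have hstep : layOnStep l = (a, (t'.take d).map (· - 1) ++ t'.drop d) := by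
    rw [layOnStep, hm]; simp only [ha, ht']
  have hperm' : t'.Perm (t ++ List.replicate a 1) := ht' ▸ List.perm_insertionSort _ _
  have hcount : d ≤ t'.countP (0 < ·) := by
    rw [hperm'.countP_eq, List.countP_append]
    simp only [List.countP_replicate, Order.lt_one_iff, decide_true, ↓reduceIte]
    omega
  have hdec := List.sum_map_pred_take_append_drop (ht' ▸ List.pairwise_insertionSort _ _) hcount
  have hsumt' : t'.sum = t.sum + a := by simp [hperm'.sum_eq]
  refine ⟨d, hd, ?_, ?_⟩ <;> simp only [hstep] <;> omega

theorem layOnZAux_parity {fuel : ℕ} {l : List ℕ} (h : l.sum < fuel) :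
    Even l.sum ↔ Even (layOnZAux fuel l) := by
  induction fuel generalizing l with
  | zero => omega
  | succ n ih =>
    by_cases hz : l.all (· == 0)
    · have : l.sum = 0 := List.sum_eq_zero (by simpa using hz)
      rw [layOnZAux, if_pos hz, this]
    · rw [layOnZAux, if_neg hz]
      have hl : l.sum ≠ 0 := by simpa [List.sum_eq_zero_iff] using hz
      obtain ⟨d, hd, ha, hstep⟩ := layOnStep_sum hl
      have := ih (l := (layOnStep l).2) (by omega)
      rw [Nat.even_iff, Nat.even_iff] at this ⊢
      omega

/-- The number of ones added in the lay-on process has the same parity as the sum of the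
elements of the starting sequence. -/
theorem layOn_parity (l : List ℕ) : (Even l.sum ↔ Even (layOnZ l)) :=
  layOnZAux_parity (Nat.lt_succ_self _)
end

section
/- Every sequence s = (d_1,...,d_n) of integers with d_1 ≥ d_2 ≥ ... ≥ d_n ≥ 2 has a connected extension: there exists a nonnegative integer z such that the sequence obtained by appending z elements equal to 1 to s is the degree sequence of a connected simple graph. -/
open SimpleGraph Finset

/-! A caterpillar realizes an extension. Along the path on the `n` vertices every degree is at
most `2 ≤ d i`, so hanging `d i - deg i` pendant leaves on vertex `i` gives a connected graph in
which vertex `i` has degree `d i` and all other vertices are leaves. For `n = 0` a single edge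
does. -/

namespace SimpleGraph

variable {V : Type*}

def attachLeaves (H : SimpleGraph V) (ℓ : V → ℕ) : SimpleGraph (V ⊕ Σ v, Fin (ℓ v)) where
  Adj
    | .inl u, .inl v => H.Adj u v
    | .inl u, .inr x => x.1 = u
    | .inr x, .inl u => x.1 = u
    | .inr _, .inr _ => False
  symm := ⟨by
    rintro (u | x) (v | y) h
    exacts [h.symm, h, h, h]⟩
  loopless := ⟨by rintro (u | x) h; exacts [H.loopless.irrefl u h, h]⟩

variable {H : SimpleGraph V} {ℓ : V → ℕ}

@[simp] lemma attachLeaves_adj_inl_inl {u v : V} :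
    (H.attachLeaves ℓ).Adj (.inl u) (.inl v) ↔ H.Adj u v := Iff.rfl

@[simp] lemma attachLeaves_adj_inl_inr {u : V} {x : Σ v, Fin (ℓ v)} :
    (H.attachLeaves ℓ).Adj (.inl u) (.inr x) ↔ x.1 = u := Iff.rfl

@[simp] lemma attachLeaves_adj_inr_inl {u : V} {x : Σ v, Fin (ℓ v)} :
    (H.attachLeaves ℓ).Adj (.inr x) (.inl u) ↔ x.1 = u := Iff.rfl

@[simp] lemma attachLeaves_not_adj_inr_inr {x y : Σ v, Fin (ℓ v)} :
    ¬(H.attachLeaves ℓ).Adj (.inr x) (.inr y) := id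

instance [DecidableEq V] [DecidableRel H.Adj] : DecidableRel (H.attachLeaves ℓ).Adj
  | .inl _, .inl _ => decidable_of_iff' _ attachLeaves_adj_inl_inl
  | .inl _, .inr _ => decidable_of_iff' _ attachLeaves_adj_inl_inr
  | .inr _, .inl _ => decidable_of_iff' _ attachLeaves_adj_inr_inl
  | .inr _, .inr _ => isFalse attachLeaves_not_adj_inr_inr

lemma Connected.attachLeaves (hH : H.Connected) : (H.attachLeaves ℓ).Connected := by
  let ι : H →g H.attachLeaves ℓ := ⟨Sum.inl, id⟩
  have reachable_from_spine :
      ∀ w, (H.attachLeaves ℓ).Reachable (.inl (Sum.elim id Sigma.fst w)) w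
    | .inl _ => .rfl
    | .inr x => Adj.reachable (attachLeaves_adj_inl_inr.mpr rfl)
  obtain ⟨v⟩ := hH.nonempty
  exact (connected_iff_exists_forall_reachable _).mpr
    ⟨.inl v, fun w => ((hH.preconnected v _).map ι).trans (reachable_from_spine w)⟩

variable [Fintype V] [DecidableEq V] [DecidableRel H.Adj]

lemma attachLeaves_degree_inl (v : V) :
    (H.attachLeaves ℓ).degree (.inl v) = H.degree v + ℓ v := by
  have : (H.attachLeaves ℓ).neighborFinset (.inl v) =
      (H.neighborFinset v).disjSum (({v} : Finset V).sigma fun _ => univ) := by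
    ext (u | x) <;> simp [eq_comm]
  rw [← card_neighborFinset_eq_degree, this, card_disjSum, card_sigma, sum_singleton,
    card_univ, Fintype.card_fin, card_neighborFinset_eq_degree]

lemma attachLeaves_degree_inr (x : Σ v, Fin (ℓ v)) :
    (H.attachLeaves ℓ).degree (.inr x) = 1 := by
  have : (H.attachLeaves ℓ).neighborFinset (.inr x) = {.inl x.1} := by
    ext (u | y) <;> simp [eq_comm]
  rw [← card_neighborFinset_eq_degree, this, card_singleton]

instance (n : ℕ) : DecidableRel (pathGraph n).Adj := fun _ _ => decidable_of_iff' _ pathGraph_adj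

lemma pathGraph_degree_le_two {n : ℕ} (v : Fin n) : (pathGraph n).degree v ≤ 2 :=
  calc (pathGraph n).degree v = #((pathGraph n).neighborFinset v |>.map Fin.valEmbedding) :=
        (card_map _).symm
    _ ≤ #{(v : ℕ) - 1, (v : ℕ) + 1} := card_le_card fun w hw => by
        simp only [mem_map, mem_neighborFinset, pathGraph_adj, Fin.valEmbedding_apply] at hw
        obtain ⟨w, hvw, rfl⟩ := hw
        simp only [mem_insert, mem_singleton]
        omega
    _ ≤ 2 := card_le_two

end SimpleGraph

lemma degSeq_eq_of_iso {V : Type*} [Fintype V] {G : SimpleGraph V} [DecidableRel G.Adj] {m : ℕ}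
    {G' : SimpleGraph (Fin m)} [DecidableRel G'.Adj] (f : G ≃g G') :
    degSeq G' = univ.val.map fun v => G.degree v := by
  rw [degSeq, ← Multiset.map_univ_val_equiv f.toEquiv, Multiset.map_map]
  exact Multiset.map_congr rfl fun v _ => f.degree_eq v

lemma exists_connected_realization_of_card_eq {V : Type*} [Fintype V] {G : SimpleGraph V}
    [DecidableRel G.Adj] (hG : G.Connected) {m : ℕ} (hm : Fintype.card V = m) :
    ∃ (G' : SimpleGraph (Fin m)) (_ : DecidableRel G'.Adj),
      G'.Connected ∧ degSeq G' = univ.val.map fun v => G.degree v := by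
  let f := Iso.map (Fintype.equivFinOfCardEq hm) G
  exact ⟨_, inferInstance, f.connected_iff.mp hG, degSeq_eq_of_iso f⟩

/-- Every sequence of integers all at least `2` has a connected extension: appending a suitable
number `z` of elements equal to `1` yields the degree sequence of a connected simple graph. -/
theorem connected_extension (n : ℕ) (d : Fin n → ℕ) (h2 : ∀ i, 2 ≤ d i) :
    ∃ (z : ℕ) (G : SimpleGraph (Fin (n + z))) (_ : DecidableRel G.Adj),
      G.Connected ∧ degSeq G = Finset.univ.val.map d + Multiset.replicate z 1 := by
  cases n with
  | zero =>
    refine ⟨2, ⊤, inferInstance, connected_top, ?_⟩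
    rw [univ_eq_empty, empty_val, Multiset.map_zero, zero_add]
    decide
  | succ n =>
    let ℓ i := d i - (pathGraph (n + 1)).degree i
    have spine_degree_add : ∀ i, (pathGraph (n + 1)).degree i + ℓ i = d i := fun i =>
      Nat.add_sub_cancel' ((pathGraph_degree_le_two i).trans (h2 i))
    obtain ⟨G, hdec, hG, hdeg⟩ := exists_connected_realization_of_card_eq
      ((pathGraph_connected n).attachLeaves (ℓ := ℓ))
      (m := n + 1 + Fintype.card (Σ i, Fin (ℓ i))) (by simp)
    refine ⟨_, G, hdec, hG, ?_⟩
    rw [hdeg, ← univ_disjSum_univ, val_disjSum, Multiset.map_disjSum]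
    simp [attachLeaves_degree_inl, attachLeaves_degree_inr, spine_degree_add]
end

section
/- For every n ≥ 3, there exists a connected (n−1)-regular simple graph G on 2n vertices whose smallest nontrivial normalized-Laplacian eigenvalue satisfies λ₁(G) ≤ 4/(n−1)². -/
open SimpleGraph Finset

/-!
Two copies of `K_n - e` joined by two bridge edges form an `(n-1)`-regular graph, so its
normalized Laplacian is `I - A/(n-1)`. The vector equal to `n-2` at the four bridge endpoints and
to `θ+1` at the other vertices, with opposite signs on the two cliques, is an eigenvector of `A`
with eigenvalue `θ` as soon as `θ` is a root of `p(x) = x² - (d-3)x - (3d-4)`, where `d = n-1`.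
Since `p(d - 4/d) ≤ 0 < 4 = p(d)`, the larger root satisfies `d - 4/d ≤ θ < d`, so `1 - θ/d` is a
nonzero eigenvalue of the normalized Laplacian of size at most `4/d²`.
-/

open Matrix

theorem Matrix.mem_spectrum_of_mulVec_eq_smul {ι R : Type*} [Fintype ι] [DecidableEq ι]
    [CommRing R] {A : Matrix ι ι R} {f : ι → R} {μ : R} (hf : f ≠ 0) (h : A *ᵥ f = μ • f) :
    μ ∈ spectrum R A := by
  rw [← Matrix.spectrum_toLin']
  exact (Module.End.hasEigenvalue_of_hasEigenvector
    ⟨Module.End.mem_eigenspace_iff.mpr (by simpa using h), hf⟩).mem_spectrum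

theorem SimpleGraph.Iso.adjMatrix_mulVec_comp {V W α : Type*} [Fintype V] [Fintype W]
    [NonAssocSemiring α] {G : SimpleGraph V} {H : SimpleGraph W} [DecidableRel G.Adj]
    [DecidableRel H.Adj] (φ : G ≃g H) (f : W → α) :
    G.adjMatrix α *ᵥ (f ∘ φ) = (H.adjMatrix α *ᵥ f) ∘ φ := by
  ext v
  simp only [Matrix.mulVec, dotProduct, Function.comp_apply]
  rw [← φ.toEquiv.sum_comp]
  simp [SimpleGraph.adjMatrix_apply, φ.map_adj_iff]

theorem SimpleGraph.IsRegularOfDegree.of_iso_s14 {V W : Type*} [Fintype V] [Fintype W]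
    {G : SimpleGraph V} {H : SimpleGraph W} [DecidableRel G.Adj] [DecidableRel H.Adj]
    (φ : G ≃g H) {d : ℕ} (hH : H.IsRegularOfDegree d) : G.IsRegularOfDegree d := fun v =>
  (φ.degree_eq v).symm.trans (hH (φ v))

section NormalizedLaplacian

variable {m : ℕ} {G : SimpleGraph (Fin m)} [DecidableRel G.Adj]

theorem normLap_eq_of_isRegularOfDegree {d : ℕ} (hG : G.IsRegularOfDegree d) (hd : d ≠ 0) :
    normLap G = 1 - (d : ℝ)⁻¹ • G.adjMatrix ℝ := by
  ext v w
  have hsqrt : Real.sqrt d * Real.sqrt d = d := Real.mul_self_sqrt d.cast_nonneg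
  by_cases hvw : v = w
  · subst hvw
    simp [normLap, hG v, hd]
  · by_cases hadj : G.Adj v w
    · simp only [normLap, Matrix.of_apply, hG v, hG w, hvw, hadj, hsqrt, if_false, if_true]
      simp [hvw, hadj]
    · simp [normLap, hvw, hadj]

theorem normLap_mulVec_of_adjMatrix_mulVec {d : ℕ} (hG : G.IsRegularOfDegree d) (hd : d ≠ 0)
    {f : Fin m → ℝ} {θ : ℝ} (hf : G.adjMatrix ℝ *ᵥ f = θ • f) :
    normLap G *ᵥ f = (1 - θ / d) • f := by
  rw [normLap_eq_of_isRegularOfDegree hG hd, Matrix.sub_mulVec, Matrix.one_mulVec,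
    Matrix.smul_mulVec, hf, smul_smul, sub_smul, one_smul, inv_mul_eq_div]

theorem lambda1_le {μ : ℝ} (hμ : μ ∈ spectrum ℝ (normLap G)) (hμ0 : μ ≠ 0) : lambda1 G ≤ μ :=
  csInf_le ((Matrix.finite_spectrum _).subset fun _ h => h.2).bddBelow ⟨hμ0, hμ⟩

theorem one_sub_div_mem_spectrum_normLap_of_iso {V : Type*} [Fintype V] {H : SimpleGraph V}
    [DecidableRel H.Adj] (φ : G ≃g H) {d : ℕ} (hH : H.IsRegularOfDegree d) (hd : d ≠ 0)
    {f : V → ℝ} (hf : f ≠ 0) {θ : ℝ} (hθ : H.adjMatrix ℝ *ᵥ f = θ • f) :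
    1 - θ / d ∈ spectrum ℝ (normLap G) := by
  have hfφ : f ∘ φ ≠ 0 := fun h => hf <| funext fun w => by
    simpa using congrFun h (φ.symm w)
  refine Matrix.mem_spectrum_of_mulVec_eq_smul hfφ
    (normLap_mulVec_of_adjMatrix_mulVec (hH.of_iso_s14 φ) hd ?_)
  rw [φ.adjMatrix_mulVec_comp, hθ]
  rfl

end NormalizedLaplacian

section BridgedCliquesEigenvalue

variable {d : ℝ}

noncomputable def bridgedCliquesEigenvalue (d : ℝ) : ℝ := (d - 3 + √((d + 3) ^ 2 - 16)) / 2

theorem bridgedCliquesEigenvalue_sq (hd : 1 ≤ d) :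
    bridgedCliquesEigenvalue d ^ 2 = (d - 3) * bridgedCliquesEigenvalue d + (3 * d - 4) := by
  have hsqrt := Real.sq_sqrt (show 0 ≤ (d + 3) ^ 2 - 16 by nlinarith)
  unfold bridgedCliquesEigenvalue
  linear_combination hsqrt / 4

theorem bridgedCliquesEigenvalue_ne (hd : 1 ≤ d) : bridgedCliquesEigenvalue d ≠ d := by
  intro h
  have := bridgedCliquesEigenvalue_sq hd
  rw [h] at this
  linarith

theorem sub_four_div_le_bridgedCliquesEigenvalue (hd : 2 ≤ d) :
    d - 4 / d ≤ bridgedCliquesEigenvalue d := by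
  have hgap : (d + 3) ^ 2 - 16 - (d + 3 - 8 / d) ^ 2 = 16 * (3 * d - 4) / d ^ 2 := by
    field_simp
    ring
  have hsqrt : d + 3 - 8 / d ≤ √((d + 3) ^ 2 - 16) := by
    refine Real.le_sqrt_of_sq_le ?_
    have : 0 ≤ 16 * (3 * d - 4) / d ^ 2 := by
      apply div_nonneg <;> nlinarith
    linarith
  have h8 : 8 / d = 2 * (4 / d) := by ring
  unfold bridgedCliquesEigenvalue
  linarith

theorem one_sub_bridgedCliquesEigenvalue_div_le (hd : 2 ≤ d) :
    1 - bridgedCliquesEigenvalue d / d ≤ 4 / d ^ 2 := by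
  have hd0 : 0 < d := by linarith
  have := div_le_div_of_nonneg_right (sub_four_div_le_bridgedCliquesEigenvalue hd) hd0.le
  have hsplit : (d - 4 / d) / d = 1 - 4 / d ^ 2 := by
    field_simp
  linarith

theorem one_sub_bridgedCliquesEigenvalue_div_ne_zero (hd : 1 ≤ d) :
    1 - bridgedCliquesEigenvalue d / d ≠ 0 :=
  sub_ne_zero.mpr (div_ne_one_of_ne (bridgedCliquesEigenvalue_ne hd)).symm

end BridgedCliquesEigenvalue

theorem Fin.sum_ite_val_lt_two {R : Type*} [CommRing R] {n : ℕ} (hn : 2 ≤ n) (α β : R) :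
    ∑ b : Fin n, (if b.val < 2 then α else β) = 2 * α + ((n : R) - 2) * β := by
  have hcard : #{b : Fin n | b.val < 2} = 2 := by
    rw [Fin.card_filter_val_lt]; omega
  have hcard' : #{b : Fin n | ¬b.val < 2} = n - 2 := by
    rw [Finset.filter_not, Finset.card_sdiff_of_subset (filter_subset _ _), hcard, card_univ,
      Fintype.card_fin]
  rw [Finset.sum_ite, Finset.sum_const, Finset.sum_const, hcard, hcard', nsmul_eq_mul,
    nsmul_eq_mul, Nat.cast_sub hn]
  push_cast
  ring

section BridgedCliques

variable {n : ℕ}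

/-- Vertex `(i, a)` is vertex `a` of the `i`-th copy of `K_n`. The deleted edges are `{0, 1}` in
each copy, and the added edges join `(0, a)` to `(1, a)` for `a < 2`. -/
def bridgedCliques (n : ℕ) : SimpleGraph (Fin 2 × Fin n) :=
  SimpleGraph.fromRel fun p q =>
    p.1 = q.1 ∧ ¬(p.2.val < 2 ∧ q.2.val < 2) ∨ p.2 = q.2 ∧ p.2.val < 2

instance : DecidableRel (bridgedCliques n).Adj := by
  unfold bridgedCliques
  infer_instance

@[simp]
theorem bridgedCliques_adj_same_side {i : Fin 2} {a b : Fin n} :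
    (bridgedCliques n).Adj (i, a) (i, b) ↔ a ≠ b ∧ ¬(a.val < 2 ∧ b.val < 2) := by
  simp only [bridgedCliques, SimpleGraph.fromRel_adj, ne_eq, Prod.mk.injEq, true_and, Fin.ext_iff]
  omega

@[simp]
theorem bridgedCliques_adj_rev_side {i : Fin 2} {a b : Fin n} :
    (bridgedCliques n).Adj (i, a) (i.rev, b) ↔ a = b ∧ a.val < 2 := by
  fin_cases i <;> simp [bridgedCliques, Fin.ext_iff] <;> omega

theorem bridgedCliques_sum_neighborFinset (hn : 2 ≤ n) (c : Fin 2 → ℝ) (α β : ℝ)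
    (i : Fin 2) (a : Fin n) :
    ∑ q ∈ (bridgedCliques n).neighborFinset (i, a), c q.1 * (if q.2.val < 2 then α else β) =
      if a.val < 2 then c i * (((n : ℝ) - 2) * β) + c i.rev * α
      else c i * (2 * α + ((n : ℝ) - 3) * β) := by
  have hsides : ∀ F : Fin 2 → ℝ, ∑ j, F j = F i + F i.rev := fun F => by
    fin_cases i <;> simp [Fin.sum_univ_two, add_comm]
  rw [neighborFinset_eq_filter, sum_filter, Fintype.sum_prod_type, hsides]
  simp only [bridgedCliques_adj_same_side, bridgedCliques_adj_rev_side, ← mul_ite_zero,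
    ← Finset.mul_sum]
  split_ifs with ha
  · have hsame : ∀ b : Fin n, (if a ≠ b ∧ ¬(a.val < 2 ∧ b.val < 2) then
        (if b.val < 2 then α else β) else 0) = if b.val < 2 then 0 else β := fun b => by
      by_cases hb : b.val < 2
      · simp [ha, hb]
      · simp [ha, hb, show a ≠ b by rintro rfl; exact hb ha]
    rw [Finset.sum_congr rfl fun b _ => hsame b, Fin.sum_ite_val_lt_two hn]
    simp only [ha, and_true, Finset.sum_ite_eq, Finset.mem_univ, if_true]
    ring
  · have hsame : ∀ b : Fin n, (if a ≠ b ∧ ¬(a.val < 2 ∧ b.val < 2) then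
        (if b.val < 2 then α else β) else 0) =
        (if b.val < 2 then α else β) - if a = b then β else 0 := fun b => by
      by_cases hab : a = b
      · subst hab; simp [ha]
      · simp [ha, hab]
    rw [Finset.sum_congr rfl fun b _ => hsame b, Finset.sum_sub_distrib,
      Fin.sum_ite_val_lt_two hn, Finset.sum_ite_eq]
    simp only [Finset.mem_univ, if_true, ha, and_false, if_false, Finset.sum_const_zero]
    ring

theorem bridgedCliques_isRegularOfDegree (hn : 2 ≤ n) :
    (bridgedCliques n).IsRegularOfDegree (n - 1) := by
  rintro ⟨i, a⟩
  have h := bridgedCliques_sum_neighborFinset hn 1 1 1 i a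
  simp only [Pi.one_apply, one_mul, ite_self, Finset.sum_const, nsmul_eq_mul, mul_one,
    card_neighborFinset_eq_degree] at h
  have : ((bridgedCliques n).degree (i, a) : ℝ) = ((n - 1 : ℕ) : ℝ) := by
    rw [h, Nat.cast_sub (by omega)]
    split_ifs <;> ring
  exact_mod_cast this

theorem bridgedCliques_connected (hn : 3 ≤ n) : (bridgedCliques n).Connected := by
  let o : Fin n := ⟨2, hn⟩
  have hside : ∀ i a, (bridgedCliques n).Reachable (i, o) (i, a) := by
    intro i a
    by_cases h : a = o
    · rw [h]
    · exact (bridgedCliques_adj_same_side.mpr ⟨Ne.symm h, by simp [o]⟩).reachable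
  have hbridge : (bridgedCliques n).Reachable (0, o) (1, o) := by
    have hcross : (bridgedCliques n).Adj (0, ⟨0, by omega⟩) ((0 : Fin 2).rev, ⟨0, by omega⟩) :=
      bridgedCliques_adj_rev_side.mpr ⟨rfl, by simp⟩
    exact ((hside 0 _).trans hcross.reachable).trans (hside 1 _).symm
  rw [connected_iff_exists_forall_reachable]
  refine ⟨(0, o), fun ⟨i, a⟩ => ?_⟩
  fin_cases i
  · exact hside 0 a
  · exact hbridge.trans (hside 1 a)

noncomputable def bridgedCliquesEigenvector (n : ℕ) : Fin 2 × Fin n → ℝ := fun q =>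
  ![1, -1] q.1 * if q.2.val < 2 then (n : ℝ) - 2 else bridgedCliquesEigenvalue ((n : ℝ) - 1) + 1

theorem bridgedCliquesEigenvector_ne_zero (hn : 3 ≤ n) :
    bridgedCliquesEigenvector n ≠ 0 := by
  intro h
  have h0 := congrFun h (0, ⟨0, by omega⟩)
  have : (3 : ℝ) ≤ n := by exact_mod_cast hn
  simp [bridgedCliquesEigenvector] at h0
  linarith

theorem bridgedCliques_adjMatrix_mulVec_eigenvector (hn : 2 ≤ n) :
    (bridgedCliques n).adjMatrix ℝ *ᵥ bridgedCliquesEigenvector n =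
      bridgedCliquesEigenvalue ((n : ℝ) - 1) • bridgedCliquesEigenvector n := by
  ext ⟨i, a⟩
  have hrev : (![1, -1] : Fin 2 → ℝ) i.rev = -![1, -1] i := by fin_cases i <;> simp
  have hsq := bridgedCliquesEigenvalue_sq (d := (n : ℝ) - 1) (by
    have : (2 : ℝ) ≤ n := by exact_mod_cast hn
    linarith)
  rw [adjMatrix_mulVec_apply]
  unfold bridgedCliquesEigenvector
  rw [bridgedCliques_sum_neighborFinset hn, hrev, Pi.smul_apply, smul_eq_mul]
  split_ifs with ha
  · ring
  · linear_combination -![1, -1] i * hsq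

end BridgedCliques

/-- For every `n ≥ 3` there is a connected `(n-1)`-regular graph on `2n` vertices with
`λ₁(G) ≤ 4/(n-1)²`. -/
theorem regular_small_gap_exists (n : ℕ) (hn : 3 ≤ n) :
    ∃ (G : SimpleGraph (Fin (2 * n))) (_ : DecidableRel G.Adj),
      G.Connected ∧ (∀ v, G.degree v = n - 1) ∧
      lambda1 G ≤ 4 / ((n : ℝ) - 1) ^ 2 := by
  let φ := Iso.comap finProdFinEquiv.symm (bridgedCliques n)
  have hreg := bridgedCliques_isRegularOfDegree (n := n) (by omega)
  have hd : (2 : ℝ) ≤ n - 1 := by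
    have : (3 : ℝ) ≤ n := by exact_mod_cast hn
    linarith
  have hspec := one_sub_div_mem_spectrum_normLap_of_iso φ hreg (by omega)
    (bridgedCliquesEigenvector_ne_zero hn) (bridgedCliques_adjMatrix_mulVec_eigenvector (by omega))
  rw [Nat.cast_sub (by omega), Nat.cast_one] at hspec
  refine ⟨_, inferInstance, φ.connected_iff.mpr (bridgedCliques_connected hn), hreg.of_iso_s14 φ, ?_⟩
  calc lambda1 _ ≤ 1 - bridgedCliquesEigenvalue ((n : ℝ) - 1) / ((n : ℝ) - 1) :=
        lambda1_le hspec (one_sub_bridgedCliquesEigenvalue_div_ne_zero (by linarith))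
    _ ≤ 4 / ((n : ℝ) - 1) ^ 2 := one_sub_bridgedCliquesEigenvalue_div_le hd
end
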